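/- arXiv:1904.02604 — 8 statements merged into one kernel-verified Lean document; each statement's English description precedes it below -/
import Mathlib

section
/- There exists a constant c ∈ (0,1) such that for every bounded subset S of the 2×2 real matrices containing the identity matrix, one has E(S²) ≥ Λ(S²) ≥ c² · E(S)², where S² = { gh : g, h ∈ S }. -/
open scoped Pointwise
noncomputable section

/-- Operator norm of a `2×2` real matrix induced by the Euclidean norm on `ℝ²`. -/
def opNorm (A : Matrix (Fin 2) (Fin 2) ℝ) : ℝ :=
  ‖LinearMap.toContinuousLinearMap (Matrix.toEuclideanLin A)‖

/-- The norm `‖Q‖ = sup_{g ∈ Q} ‖g‖` of a set of matrices. -/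
def setNorm (Q : Set (Matrix (Fin 2) (Fin 2) ℝ)) : ℝ :=
  sSup (opNorm '' Q)

/-- `lam` is a (complex) eigenvalue of the real matrix `A`. -/
def IsEigenvalue (A : Matrix (Fin 2) (Fin 2) ℝ) (lam : ℂ) : Prop :=
  ∃ v : Fin 2 → ℂ, v ≠ 0 ∧ (A.map (Complex.ofReal)).mulVec v = lam • v

/-- `Λ(Q)`: the maximal modulus of an eigenvalue of an element of `Q`. -/
def matLambda (Q : Set (Matrix (Fin 2) (Fin 2) ℝ)) : ℝ :=
  sSup {x : ℝ | ∃ q ∈ Q, ∃ lam : ℂ, IsEigenvalue q lam ∧ x = ‖lam‖}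

/-- `E(Q)`: the minimal norm of `Q` over all conjugations by elements of `GL(2,ℝ)`. -/
def minNorm (Q : Set (Matrix (Fin 2) (Fin 2) ℝ)) : ℝ :=
  ⨅ g : GL (Fin 2) ℝ, setNorm ((fun s => (g : Matrix (Fin 2) (Fin 2) ℝ) * s * ((g⁻¹ : GL (Fin 2) ℝ) : Matrix (Fin 2) (Fin 2) ℝ)) '' Q)

/-- The canonical embedding of `SL(2,ℤ)` into the `2×2` real matrices. -/
def toReal (g : Matrix.SpecialLinearGroup (Fin 2) ℤ) : Matrix (Fin 2) (Fin 2) ℝ :=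
  (g : Matrix (Fin 2) (Fin 2) ℤ).map (Int.cast : ℤ → ℝ)

/-- The cross product (determinant) of two vectors of `ℝ²`. -/
def cross (u v : Fin 2 → ℝ) : ℝ := u 0 * v 1 - u 1 * v 0

/-- The Euclidean norm on `ℝ²`. -/
def enorm2 (u : Fin 2 → ℝ) : ℝ := Real.sqrt (u 0 ^ 2 + u 1 ^ 2)

/-- Fubini–Study distance between the lines spanned by `u` and `v`. -/
def pdist (u v : Fin 2 → ℝ) : ℝ := |cross u v| / (enorm2 u * enorm2 v)

/-!
Conjugation preserves eigenvalues and an eigenvalue is bounded by the operator norm, which gives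
`Λ(S²) ≤ E(S²)`.

For the other inequality take `c = 10⁻⁴`, let `N = E(S)` and suppose `Λ(S²) < (cN)²`. Every `t ∈ S`
then has eigenvalues of modulus `< cN`, so `tr t`, `det t` and `tr (p t)` (`p ∈ S`) are tiny
compared with `N`, and this survives conjugation. Conjugate `S` so that its norm is `< 2N`, pick `s`
of norm `> N/2` and rotate so that `s` sends a vector of norm `≤ 1` to `(a, 0)` with `a > N/2`.
Small `det s` and `tr s` force `s ≈ [[0, s₀₁], [0, 0]]` with `|s₀₁| ≥ N/4`; small `tr (s t)` then
forces `t₁₀ ≈ 0`, and small `tr t`, `det t` force a small diagonal. Conjugating by `diag(1, 10)`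
brings every element to norm `≤ N/2 < E(S)`, a contradiction.
-/

-- With this instance `opNorm A` is definitionally `‖A‖`.
open scoped Matrix.Norms.L2Operator
open Matrix WithLp Set

local notation "M₂" => Matrix (Fin 2) (Fin 2) ℝ

namespace Matrix

variable {𝕜 n : Type*} [RCLike 𝕜] [Fintype n] [DecidableEq n]

lemma norm_apply_le_l2_opNorm (A : Matrix n n 𝕜) (i j : n) : ‖A i j‖ ≤ ‖A‖ := by
  set x : EuclideanSpace 𝕜 n := toLp 2 (Pi.single j 1)
  calc ‖A i j‖ = ‖toEuclideanCLM (𝕜 := 𝕜) A x i‖ := by simp [x, mulVec_single]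
    _ ≤ ‖toEuclideanCLM (𝕜 := 𝕜) A x‖ := PiLp.norm_apply_le _ _
    _ ≤ ‖A‖ * ‖x‖ := (toEuclideanCLM (𝕜 := 𝕜) A).le_opNorm x
    _ = ‖A‖ := by simp [x, PiLp.norm_single]

lemma l2_opNorm_single_le (i j : n) (c : 𝕜) : ‖single i j c‖ ≤ ‖c‖ := by
  refine (toEuclideanCLM (𝕜 := 𝕜) (single i j c)).opNorm_le_bound (norm_nonneg c) fun x => ?_
  calc ‖toEuclideanCLM (𝕜 := 𝕜) (single i j c) x‖ = ‖c * x j‖ := by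
        rw [show x = toLp 2 (ofLp x) from rfl, toEuclideanCLM_toLp, single_mulVec]
        exact PiLp.norm_single 2 _ i _
    _ ≤ ‖c‖ * ‖x‖ := by rw [norm_mul]; gcongr; exact PiLp.norm_apply_le x j

lemma l2_opNorm_le_sum_norm_apply (A : Matrix n n 𝕜) : ‖A‖ ≤ ∑ i, ∑ j, ‖A i j‖ := by
  conv_lhs => rw [matrix_eq_sum_single A]
  refine (norm_sum_le _ _).trans (Finset.sum_le_sum fun i _ => ?_)
  exact (norm_sum_le _ _).trans (Finset.sum_le_sum fun j _ => l2_opNorm_single_le i j _)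

end Matrix

lemma map_ofReal_mul (A B : M₂) :
    (A * B).map Complex.ofReal = A.map Complex.ofReal * B.map Complex.ofReal :=
  Matrix.map_mul (f := Complex.ofRealHom)

lemma isEigenvalue_of_mem_roots {A : M₂} {μ : ℂ}
    (h : μ ∈ (A.map Complex.ofReal).charpoly.roots) : IsEigenvalue A μ := by
  have hμ : μ ∈ spectrum ℂ (toLin' (A.map Complex.ofReal)) := by
    rw [spectrum_toLin', mem_spectrum_iff_isRoot_charpoly]
    exact (Polynomial.mem_roots'.1 h).2
  obtain ⟨v, hv, hv0⟩ := (Module.End.hasEigenvalue_iff_mem_spectrum.2 hμ).exists_hasEigenvector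
  exact ⟨v, hv0, by simpa using Module.End.mem_eigenspace_iff.1 hv⟩

lemma exists_isEigenvalue_trace_det (A : M₂) :
    ∃ μ₁ μ₂ : ℂ, IsEigenvalue A μ₁ ∧ IsEigenvalue A μ₂ ∧
      (A.trace : ℂ) = μ₁ + μ₂ ∧ (A.det : ℂ) = μ₁ * μ₂ := by
  set B := A.map Complex.ofReal
  have hcard : B.charpoly.roots.card = 2 := by
    rw [Polynomial.splits_iff_card_roots.1 (IsAlgClosed.splits B.charpoly),
      charpoly_natDegree_eq_dim, Fintype.card_fin]
  obtain ⟨μ₁, μ₂, hroots⟩ := Multiset.card_eq_two.1 hcard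
  refine ⟨μ₁, μ₂, isEigenvalue_of_mem_roots (by simp [B, hroots]),
    isEigenvalue_of_mem_roots (by simp [B, hroots]), ?_, ?_⟩
  · rw [← Complex.ofRealHom_eq_coe, AddMonoidHom.map_trace]
    exact (trace_eq_sum_roots_charpoly B).trans (by simp [hroots])
  · rw [← Complex.ofRealHom_eq_coe, RingHom.map_det]
    exact (det_eq_prod_roots_charpoly B).trans (by simp [hroots])

lemma IsEigenvalue.sq {A : M₂} {μ : ℂ} (h : IsEigenvalue A μ) : IsEigenvalue (A * A) (μ ^ 2) := by
  obtain ⟨v, hv0, hv⟩ := h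
  refine ⟨v, hv0, ?_⟩
  rw [map_ofReal_mul, ← mulVec_mulVec, hv, mulVec_smul, hv, smul_smul, pow_two]

def conjBy (g : GL (Fin 2) ℝ) (A : M₂) : M₂ := (g : M₂) * A * ((g⁻¹ : GL (Fin 2) ℝ) : M₂)

lemma conjBy_mul (g : GL (Fin 2) ℝ) (A B : M₂) : conjBy g (A * B) = conjBy g A * conjBy g B := by
  simp only [conjBy, mul_assoc, Units.inv_mul_cancel_left]

lemma conjBy_conjBy (g h : GL (Fin 2) ℝ) (A : M₂) : conjBy g (conjBy h A) = conjBy (g * h) A := by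
  simp only [conjBy, _root_.mul_inv_rev, Units.val_mul, mul_assoc]

lemma conjBy_mulVec (g : GL (Fin 2) ℝ) (A : M₂) (v : Fin 2 → ℝ) :
    conjBy g A *ᵥ ((g : M₂) *ᵥ v) = (g : M₂) *ᵥ (A *ᵥ v) := by
  rw [conjBy, mulVec_mulVec, mul_assoc, Units.inv_mul, mul_one, mulVec_mulVec]

lemma trace_conjBy (g : GL (Fin 2) ℝ) (A : M₂) : (conjBy g A).trace = A.trace :=
  trace_units_conj g A

lemma det_conjBy (g : GL (Fin 2) ℝ) (A : M₂) : (conjBy g A).det = A.det :=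
  det_units_conj g A

lemma norm_conjBy_le (g : GL (Fin 2) ℝ) (A : M₂) :
    ‖conjBy g A‖ ≤ ‖(g : M₂)‖ * ‖A‖ * ‖((g⁻¹ : GL (Fin 2) ℝ) : M₂)‖ :=
  (norm_mul_le _ _).trans (by gcongr; exact norm_mul_le _ _)

lemma norm_conjBy_toUnits (U : unitary M₂) (A : M₂) : ‖conjBy (Unitary.toUnits U) A‖ = ‖A‖ := by
  rw [conjBy, Unitary.val_toUnits_apply, Unitary.val_inv_toUnits_apply,
    CStarRing.norm_mul_coe_unitary, CStarRing.norm_coe_unitary_mul]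

lemma IsEigenvalue.conjBy {A : M₂} {μ : ℂ} (h : IsEigenvalue A μ) (g : GL (Fin 2) ℝ) :
    IsEigenvalue (conjBy g A) μ := by
  obtain ⟨v, hv0, hv⟩ := h
  set G := (g : M₂).map Complex.ofReal
  set G' := ((g⁻¹ : GL (Fin 2) ℝ) : M₂).map Complex.ofReal
  have hG'G : G' * G = 1 := by
    rw [← map_ofReal_mul, Units.inv_mul]; exact Matrix.map_one _ (by simp) (by simp)
  refine ⟨G *ᵥ v, fun h0 => hv0 ?_, ?_⟩
  · rw [← one_mulVec v, ← hG'G, ← mulVec_mulVec, h0, mulVec_zero]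
  · rw [_root_.conjBy, map_ofReal_mul, map_ofReal_mul, mulVec_mulVec, mul_assoc _ G' G, hG'G,
      mul_one, ← mulVec_mulVec, hv, mulVec_smul]

lemma IsEigenvalue.norm_le {A : M₂} {μ : ℂ} (h : IsEigenvalue A μ) : ‖μ‖ ≤ ‖A‖ := by
  obtain ⟨v, hv0, hv⟩ := h
  set p : EuclideanSpace ℝ (Fin 2) := toLp 2 fun i => (v i).re
  set q : EuclideanSpace ℝ (Fin 2) := toLp 2 fun i => (v i).im
  have hv' (i : Fin 2) : A i 0 * v 0 + A i 1 * v 1 = μ * v i := by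
    simpa [mulVec, dotProduct, Fin.sum_univ_two] using congrFun hv i
  have hre (i : Fin 2) : A i 0 * (v 0).re + A i 1 * (v 1).re = (μ * v i).re := by
    simpa using congrArg Complex.re (hv' i)
  have him (i : Fin 2) : A i 0 * (v 0).im + A i 1 * (v 1).im = (μ * v i).im := by
    simpa using congrArg Complex.im (hv' i)
  have hμz (z : ℂ) : (μ * z).re ^ 2 + (μ * z).im ^ 2 = ‖μ‖ ^ 2 * (z.re ^ 2 + z.im ^ 2) := by
    simp only [Complex.sq_norm, Complex.normSq_apply, Complex.mul_re, Complex.mul_im]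
    ring
  have hnorm : ‖toEuclideanCLM (𝕜 := ℝ) A p‖ ^ 2 + ‖toEuclideanCLM (𝕜 := ℝ) A q‖ ^ 2 =
      ‖μ‖ ^ 2 * (‖p‖ ^ 2 + ‖q‖ ^ 2) := by
    simp only [EuclideanSpace.norm_sq_eq, Fin.sum_univ_two, p, q, toEuclideanCLM_toLp,
      Real.norm_eq_abs, sq_abs]
    simp only [mulVec, dotProduct, Fin.sum_univ_two, hre, him]
    linear_combination hμz (v 0) + hμz (v 1)
  have hpos : 0 < ‖p‖ ^ 2 + ‖q‖ ^ 2 := by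
    obtain ⟨i, hi⟩ := Function.ne_iff.1 hv0
    have := Complex.normSq_pos.2 hi
    rw [Complex.normSq_apply] at this
    simp only [EuclideanSpace.norm_sq_eq, Fin.sum_univ_two, p, q, Real.norm_eq_abs, sq_abs]
    fin_cases i <;> simp at this <;>
      nlinarith [sq_nonneg (v 0).re, sq_nonneg (v 1).re, sq_nonneg (v 0).im, sq_nonneg (v 1).im]
  have hle : ‖μ‖ ^ 2 * (‖p‖ ^ 2 + ‖q‖ ^ 2) ≤ ‖A‖ ^ 2 * (‖p‖ ^ 2 + ‖q‖ ^ 2) := by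
    rw [← hnorm, mul_add, ← mul_pow, ← mul_pow]
    gcongr <;> exact (toEuclideanCLM (𝕜 := ℝ) A).le_opNorm _
  exact pow_le_pow_iff_left₀ (norm_nonneg _) (norm_nonneg _) two_ne_zero |>.1
    (le_of_mul_le_mul_right hle hpos)

lemma abs_trace_le_of_isEigenvalue {A : M₂} {r : ℝ} (h : ∀ μ, IsEigenvalue A μ → ‖μ‖ ≤ r) :
    |A.trace| ≤ 2 * r := by
  obtain ⟨μ₁, μ₂, h₁, h₂, htr, -⟩ := exists_isEigenvalue_trace_det A
  calc |A.trace| = ‖μ₁ + μ₂‖ := by rw [← htr, Complex.norm_real, Real.norm_eq_abs]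
    _ ≤ ‖μ₁‖ + ‖μ₂‖ := norm_add_le _ _
    _ ≤ 2 * r := by linarith [h μ₁ h₁, h μ₂ h₂]

lemma abs_det_le_of_isEigenvalue {A : M₂} {r : ℝ} (h : ∀ μ, IsEigenvalue A μ → ‖μ‖ ≤ r) :
    |A.det| ≤ r ^ 2 := by
  obtain ⟨μ₁, μ₂, h₁, h₂, -, hdet⟩ := exists_isEigenvalue_trace_det A
  calc |A.det| = ‖μ₁‖ * ‖μ₂‖ := by rw [← norm_mul, ← hdet, Complex.norm_real, Real.norm_eq_abs]
    _ ≤ r * r := mul_le_mul (h μ₁ h₁) (h μ₂ h₂) (norm_nonneg _) ((norm_nonneg _).trans (h μ₁ h₁))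
    _ = r ^ 2 := (sq r).symm

section SetNorm

variable {Q : Set M₂}

lemma bddAbove_norm_image_conjBy (hQ : BddAbove (norm '' Q)) (g : GL (Fin 2) ℝ) :
    BddAbove (norm '' (conjBy g '' Q)) := by
  obtain ⟨C, hC⟩ := hQ
  refine ⟨‖(g : M₂)‖ * C * ‖((g⁻¹ : GL (Fin 2) ℝ) : M₂)‖, ?_⟩
  rintro _ ⟨_, ⟨q, hq, rfl⟩, rfl⟩
  exact (norm_conjBy_le g q).trans (by gcongr; exact hC (mem_image_of_mem _ hq))

lemma bddAbove_norm_image_mul (hQ : BddAbove (norm '' Q)) : BddAbove (norm '' (Q * Q)) := by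
  obtain ⟨C, hC⟩ := hQ
  refine ⟨C * C, ?_⟩
  rintro _ ⟨_, ⟨p, hp, q, hq, rfl⟩, rfl⟩
  have hp' := hC (mem_image_of_mem _ hp)
  exact (norm_mul_le p q).trans <|
    mul_le_mul hp' (hC (mem_image_of_mem _ hq)) (norm_nonneg q) ((norm_nonneg p).trans hp')

lemma le_setNorm (hQ : BddAbove (norm '' Q)) {q : M₂} (hq : q ∈ Q) : ‖q‖ ≤ setNorm Q :=
  le_csSup hQ (mem_image_of_mem _ hq)

lemma setNorm_le {r : ℝ} (hr : 0 ≤ r) (h : ∀ q ∈ Q, ‖q‖ ≤ r) : setNorm Q ≤ r :=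
  Real.sSup_le (by rintro _ ⟨q, hq, rfl⟩; exact h q hq) hr

lemma setNorm_nonneg (Q : Set M₂) : 0 ≤ setNorm Q :=
  Real.sSup_nonneg (by rintro _ ⟨q, -, rfl⟩; exact norm_nonneg q)

lemma minNorm_le_setNorm (Q : Set M₂) (g : GL (Fin 2) ℝ) : minNorm Q ≤ setNorm (conjBy g '' Q) :=
  ciInf_le ⟨0, by rintro _ ⟨h, rfl⟩; exact setNorm_nonneg _⟩ g

lemma minNorm_nonneg (Q : Set M₂) : 0 ≤ minNorm Q :=
  le_ciInf fun _ => setNorm_nonneg _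

lemma norm_le_matLambda (hQ : BddAbove (norm '' Q)) {q : M₂} (hq : q ∈ Q) {μ : ℂ}
    (hμ : IsEigenvalue q μ) : ‖μ‖ ≤ matLambda Q := by
  obtain ⟨C, hC⟩ := hQ
  refine le_csSup ⟨C, ?_⟩ ⟨q, hq, μ, hμ, rfl⟩
  rintro _ ⟨p, hp, ν, hν, rfl⟩
  exact hν.norm_le.trans (hC (mem_image_of_mem _ hp))

lemma matLambda_nonneg (Q : Set M₂) : 0 ≤ matLambda Q :=
  Real.sSup_nonneg (by rintro _ ⟨-, -, μ, -, rfl⟩; exact norm_nonneg μ)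

lemma matLambda_le_minNorm (hQ : BddAbove (norm '' Q)) : matLambda Q ≤ minNorm Q := by
  refine le_ciInf fun g => Real.sSup_le ?_ (setNorm_nonneg _)
  rintro _ ⟨q, hq, μ, hμ, rfl⟩
  exact (hμ.conjBy g).norm_le.trans
    (le_setNorm (bddAbove_norm_image_conjBy hQ g) (mem_image_of_mem _ hq))

end SetNorm

/-- The trace and determinant bounds that `Λ(T²) ≤ ε²` imposes on `T`. -/
def SmallTraceDet (ε : ℝ) (T : Set M₂) : Prop :=
  ∀ t ∈ T, |t.trace| ≤ 2 * ε ∧ |t.det| ≤ ε ^ 2 ∧ ∀ p ∈ T, |(p * t).trace| ≤ 2 * ε ^ 2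

lemma SmallTraceDet.image_conjBy {ε : ℝ} {T : Set M₂} (h : SmallTraceDet ε T)
    (g : GL (Fin 2) ℝ) : SmallTraceDet ε (conjBy g '' T) := by
  rintro _ ⟨t, ht, rfl⟩
  obtain ⟨htr, hdet, hmul⟩ := h t ht
  refine ⟨by rwa [trace_conjBy], by rwa [det_conjBy], ?_⟩
  rintro _ ⟨p, hp, rfl⟩
  rw [← conjBy_mul, trace_conjBy]
  exact hmul p hp

lemma smallTraceDet_of_matLambda_le {ε : ℝ} {S : Set M₂} (hS : BddAbove (norm '' S))
    (hε : 0 ≤ ε) (h : matLambda (S * S) ≤ ε ^ 2) : SmallTraceDet ε S := by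
  have hSS {q : M₂} (hq : q ∈ S * S) (μ : ℂ) (hμ : IsEigenvalue q μ) : ‖μ‖ ≤ ε ^ 2 :=
    (norm_le_matLambda (bddAbove_norm_image_mul hS) hq hμ).trans h
  intro t ht
  have ht' (μ : ℂ) (hμ : IsEigenvalue t μ) : ‖μ‖ ≤ ε := by
    have := hSS (mul_mem_mul ht ht) _ hμ.sq
    rw [norm_pow] at this
    exact (pow_le_pow_iff_left₀ (norm_nonneg _) hε two_ne_zero).1 this
  exact ⟨abs_trace_le_of_isEigenvalue ht', abs_det_le_of_isEigenvalue ht',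
    fun p hp => abs_trace_le_of_isEigenvalue (hSS (mul_mem_mul hp ht))⟩

lemma rotation_mem_unitary {c d : ℝ} (h : c ^ 2 + d ^ 2 = 1) : !![c, d; -d, c] ∈ unitary M₂ := by
  rw [Unitary.mem_iff]
  constructor <;> ext i j <;> fin_cases i <;> fin_cases j <;>
    simp [Matrix.mul_apply, Fin.sum_univ_two] <;> first | ring1 | linear_combination h

lemma exists_conjBy_mulVec_eq {s : M₂} {m : ℝ} (hm : 0 ≤ m) (hs : m < ‖s‖) :
    ∃ U : unitary M₂, ∃ x : Fin 2 → ℝ, ∃ a : ℝ, x 0 ^ 2 + x 1 ^ 2 ≤ 1 ∧ m < a ∧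
      conjBy (Unitary.toUnits U) s *ᵥ x = ![a, 0] := by
  obtain ⟨x, hx, hsx⟩ := (toEuclideanCLM (𝕜 := ℝ) s).exists_lt_apply_of_lt_opNorm hs
  set y := s *ᵥ ofLp x
  set a := ‖toEuclideanCLM (𝕜 := ℝ) s x‖
  have ha : 0 < a := hm.trans_lt hsx
  have hy : y 0 ^ 2 + y 1 ^ 2 = a ^ 2 := by
    simp [a, y, EuclideanSpace.norm_sq_eq, Fin.sum_univ_two]
  have hx' : x 0 ^ 2 + x 1 ^ 2 ≤ 1 := by
    have : ‖x‖ ^ 2 ≤ 1 := by nlinarith [norm_nonneg x]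
    simpa [EuclideanSpace.norm_sq_eq, Fin.sum_univ_two] using this
  set c := y 0 / a
  set d := y 1 / a
  have hcd : c ^ 2 + d ^ 2 = 1 := by
    simp only [c, d, div_pow]; field_simp; exact hy
  let U : unitary M₂ := ⟨!![c, d; -d, c], rotation_mem_unitary hcd⟩
  refine ⟨U, (U : M₂) *ᵥ ofLp x, a, ?_, hsx, ?_⟩
  · simp only [U, mulVec, dotProduct, Fin.sum_univ_two, of_apply, cons_val', cons_val_zero,
      cons_val_one, empty_val', cons_val_fin_one]
    linear_combination (x 0 ^ 2 + x 1 ^ 2) * hcd + hx'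
  · rw [← Unitary.val_toUnits_apply, conjBy_mulVec, Unitary.val_toUnits_apply]
    show (U : M₂) *ᵥ y = ![a, 0]
    ext i; fin_cases i <;> simp [U, mulVec, dotProduct, Fin.sum_univ_two, c, d]
    · field_simp; linear_combination hy
    · ring

lemma mul_apply_one_eq_of_mulVec_eq {s : M₂} {x : Fin 2 → ℝ} {a : ℝ} (h : s *ᵥ x = ![a, 0]) :
    a * s 1 0 = -(x 1 * s.det) ∧ a * s 1 1 = x 0 * s.det := by
  have h0 : s 0 0 * x 0 + s 0 1 * x 1 = a := by
    simpa [mulVec, dotProduct, Fin.sum_univ_two] using congrFun h 0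
  have h1 : s 1 0 * x 0 + s 1 1 * x 1 = 0 := by
    simpa [mulVec, dotProduct, Fin.sum_univ_two] using congrFun h 1
  rw [det_fin_two]
  constructor
  · linear_combination s 0 0 * h1 - s 1 0 * h0
  · linear_combination s 0 1 * h1 - s 1 1 * h0

lemma abs_entries_le_of_mulVec_eq {N a : ℝ} {s : M₂} {x : Fin 2 → ℝ} (hN : 0 < N)
    (hx : x 0 ^ 2 + x 1 ^ 2 ≤ 1) (ha : N / 2 < a) (h : s *ᵥ x = ![a, 0])
    (htr : |s.trace| ≤ 2 * (N / 10000)) (hdet : |s.det| ≤ (N / 10000) ^ 2) :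
    |s 0 0| ≤ 3 * N / 10000 ∧ |s 1 0| ≤ N / 10 ^ 7 ∧ |s 1 1| ≤ N / 10 ^ 7 ∧ N / 4 ≤ |s 0 1| := by
  have hx0 : |x 0| ≤ 1 := abs_le_of_sq_le_sq (by nlinarith [sq_nonneg (x 1)]) zero_le_one
  have hx1 : |x 1| ≤ 1 := abs_le_of_sq_le_sq (by nlinarith [sq_nonneg (x 0)]) zero_le_one
  have h0 : s 0 0 * x 0 + s 0 1 * x 1 = a := by
    simpa [mulVec, dotProduct, Fin.sum_univ_two] using congrFun h 0
  obtain ⟨e10, e11⟩ := mul_apply_one_eq_of_mulVec_eq h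
  have ha0 : 0 < a := by linarith
  have hdet' : |s.det| ≤ N ^ 2 / 10 ^ 8 := by linarith
  have hs10 : |s 1 0| ≤ N / 10 ^ 7 := by
    have : a * |s 1 0| ≤ |s.det| := by
      rw [← abs_of_pos ha0, ← abs_mul, e10, abs_neg, abs_mul]
      exact mul_le_of_le_one_left (abs_nonneg _) hx1
    nlinarith [abs_nonneg (s 1 0)]
  have hs11 : |s 1 1| ≤ N / 10 ^ 7 := by
    have : a * |s 1 1| ≤ |s.det| := by
      rw [← abs_of_pos ha0, ← abs_mul, e11, abs_mul]
      exact mul_le_of_le_one_left (abs_nonneg _) hx0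
    nlinarith [abs_nonneg (s 1 1)]
  have hs00 : |s 0 0| ≤ 3 * N / 10000 := by
    rw [trace_fin_two, abs_le] at htr
    rw [abs_le] at hs11 ⊢
    constructor <;> linarith
  refine ⟨hs00, hs10, hs11, ?_⟩
  have : a ≤ |s 0 0| + |s 0 1| :=
    calc a ≤ |s 0 0 * x 0| + |s 0 1 * x 1| := h0 ▸ (le_abs_self _).trans (abs_add_le _ _)
      _ ≤ |s 0 0| + |s 0 1| := by
        rw [abs_mul, abs_mul]
        exact add_le_add (mul_le_of_le_one_right (abs_nonneg _) hx0)
          (mul_le_of_le_one_right (abs_nonneg _) hx1)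
  linarith

lemma trace_mul_fin_two (s t : M₂) :
    (s * t).trace = s 0 0 * t 0 0 + s 0 1 * t 1 0 + s 1 0 * t 0 1 + s 1 1 * t 1 1 := by
  simp [trace_fin_two, mul_apply, Fin.sum_univ_two]
  ring

lemma apply_self_sq_eq (t : M₂) (i : Fin 2) :
    t i i ^ 2 = t.trace * t i i - t.det - t 0 1 * t 1 0 := by
  fin_cases i <;> simp [trace_fin_two, det_fin_two] <;> ring

lemma abs_mul_le_of_le {x y X Y : ℝ} (hx : |x| ≤ X) (hy : |y| ≤ Y) : |x * y| ≤ X * Y := by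
  rw [abs_mul]; exact mul_le_mul hx hy (abs_nonneg y) ((abs_nonneg x).trans hx)

lemma abs_entries_le_of_trace_mul_le {N : ℝ} {s t : M₂} (hN : 0 < N)
    (hs00 : |s 0 0| ≤ 3 * N / 10000) (hs10 : |s 1 0| ≤ N / 10 ^ 7) (hs11 : |s 1 1| ≤ N / 10 ^ 7)
    (hs01 : N / 4 ≤ |s 0 1|) (ht : ∀ i j, |t i j| ≤ 2 * N) (htr : |t.trace| ≤ 2 * (N / 10000))
    (hdet : |t.det| ≤ (N / 10000) ^ 2) (hst : |(s * t).trace| ≤ 2 * (N / 10000) ^ 2) :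
    |t 1 0| ≤ N / 300 ∧ ∀ i, |t i i| ≤ N / 10 := by
  have h10 : |t 1 0| ≤ N / 300 := by
    have p1 := abs_mul_le_of_le hs00 (ht 0 0)
    have p2 := abs_mul_le_of_le hs10 (ht 0 1)
    have p3 := abs_mul_le_of_le hs11 (ht 1 1)
    have e : s 0 1 * t 1 0 = (s * t).trace - s 0 0 * t 0 0 - s 1 0 * t 0 1 - s 1 1 * t 1 1 := by
      rw [trace_mul_fin_two]; ring
    have hle : N / 4 * |t 1 0| ≤ N ^ 2 / 1600 := by
      calc N / 4 * |t 1 0| ≤ |s 0 1 * t 1 0| := by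
            rw [abs_mul]; exact mul_le_mul_of_nonneg_right hs01 (abs_nonneg _)
        _ ≤ N ^ 2 / 1600 := by
          rw [e, abs_le]
          constructor <;> linarith [abs_le.1 hst, abs_le.1 p1, abs_le.1 p2, abs_le.1 p3]
    nlinarith
  refine ⟨h10, fun i => abs_le_of_sq_le_sq ?_ (by positivity)⟩
  have q1 := abs_mul_le_of_le htr (ht i i)
  have q2 := abs_mul_le_of_le (ht 0 1) h10
  rw [apply_self_sq_eq]
  linarith [sq_nonneg N, le_abs_self (t.trace * t i i), neg_le_abs t.det,
    neg_le_abs (t 0 1 * t 1 0)]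

def diagUnit (k : ℝ) (hk : k ≠ 0) : GL (Fin 2) ℝ :=
  ⟨diagonal ![1, k], diagonal ![1, k⁻¹],
    by rw [diagonal_mul_diagonal, ← diagonal_one]; congr 1; ext i; fin_cases i <;> simp [hk],
    by rw [diagonal_mul_diagonal, ← diagonal_one]; congr 1; ext i; fin_cases i <;> simp [hk]⟩

lemma norm_conjBy_diagUnit_le {k : ℝ} (hk : 0 < k) (t : M₂) :
    ‖conjBy (diagUnit k hk.ne') t‖ ≤ |t 0 0| + |t 0 1| / k + k * |t 1 0| + |t 1 1| := by
  refine (l2_opNorm_le_sum_norm_apply _).trans (le_of_eq ?_)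
  simp [conjBy, diagUnit, diagonal_mul, mul_diagonal, Fin.sum_univ_two, abs_of_pos hk]
  field_simp
  ring

lemma exists_norm_gt_of_lt_setNorm {Q : Set M₂} (hQ : Q.Nonempty) {r : ℝ} (h : r < setNorm Q) :
    ∃ q ∈ Q, r < ‖q‖ := by
  obtain ⟨_, ⟨q, hq, rfl⟩, hr⟩ := exists_lt_of_lt_csSup (hQ.image _) h
  exact ⟨q, hq, hr⟩

theorem exists_conjBy_norm_le_half {N : ℝ} (hN : 0 < N) {T : Set M₂}
    (hT : SmallTraceDet (N / 10000) T) (hnorm : ∀ t ∈ T, ‖t‖ ≤ 2 * N) {s : M₂} (hs : s ∈ T)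
    (hsN : N / 2 < ‖s‖) : ∃ g : GL (Fin 2) ℝ, ∀ t ∈ T, ‖conjBy g t‖ ≤ N / 2 := by
  obtain ⟨U, x, a, hx, ha, hsx⟩ := exists_conjBy_mulVec_eq (by positivity) hsN
  have hT' := hT.image_conjBy (Unitary.toUnits U)
  obtain ⟨hstr, hsdet, -⟩ := hT' _ (mem_image_of_mem _ hs)
  obtain ⟨hs00, hs10, hs11, hs01⟩ := abs_entries_le_of_mulVec_eq hN hx ha hsx hstr hsdet
  refine ⟨diagUnit 10 (by norm_num) * Unitary.toUnits U, fun t ht => ?_⟩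
  have ht' (i j : Fin 2) : |conjBy (Unitary.toUnits U) t i j| ≤ 2 * N := by
    rw [← Real.norm_eq_abs]
    have h1 := norm_apply_le_l2_opNorm (𝕜 := ℝ) (conjBy (Unitary.toUnits U) t) i j
    rw [norm_conjBy_toUnits] at h1
    exact h1.trans (hnorm t ht)
  obtain ⟨htr, hdet, hmul⟩ := hT' _ (mem_image_of_mem _ ht)
  obtain ⟨h10, hdiag⟩ := abs_entries_le_of_trace_mul_le hN hs00 hs10 hs11 hs01 ht' htr hdet
    (hmul _ (mem_image_of_mem _ hs))
  rw [← conjBy_conjBy]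
  refine (norm_conjBy_diagUnit_le (by norm_num) _).trans ?_
  linarith [hdiag 0, hdiag 1, ht' 0 1]

/-- **Spectral Radius Lemma.** There exists `c ∈ (0,1)` such that for every bounded subset
`S` of the `2×2` real matrices containing the identity,
`E(S²) ≥ Λ(S²) ≥ c² E(S)²`. -/
theorem spectral_radius_lemma :
    ∃ c : ℝ, c ∈ Set.Ioo (0 : ℝ) 1 ∧
      ∀ S : Set (Matrix (Fin 2) (Fin 2) ℝ),
        (∃ C : ℝ, ∀ A ∈ S, opNorm A ≤ C) → (1 : Matrix (Fin 2) (Fin 2) ℝ) ∈ S →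
        matLambda (S * S) ≤ minNorm (S * S) ∧ c ^ 2 * minNorm S ^ 2 ≤ matLambda (S * S) := by
  refine ⟨1 / 10000, ⟨by norm_num, by norm_num⟩, fun S ⟨C, hC⟩ h1S => ?_⟩
  have hS : BddAbove (norm '' S) := ⟨C, by rintro _ ⟨A, hA, rfl⟩; exact hC A hA⟩
  refine ⟨matLambda_le_minNorm (bddAbove_norm_image_mul hS), ?_⟩
  by_contra! hlt
  set N := minNorm S
  have hN : 0 < N := by nlinarith [matLambda_nonneg (S * S), minNorm_nonneg S]
  have hT : SmallTraceDet (N / 10000) S :=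
    smallTraceDet_of_matLambda_le hS (by positivity) (by linarith [div_pow N 10000 2])
  obtain ⟨g₀, hg₀⟩ : ∃ g₀, setNorm (conjBy g₀ '' S) < 2 * N :=
    exists_lt_of_ciInf_lt (show minNorm S < 2 * N by linarith)
  obtain ⟨s, hs, hsN⟩ := exists_norm_gt_of_lt_setNorm ⟨_, mem_image_of_mem _ h1S⟩
    ((half_lt_self hN).trans_le (minNorm_le_setNorm S g₀))
  obtain ⟨g, hg⟩ := exists_conjBy_norm_le_half hN (hT.image_conjBy g₀)
    (fun t ht => (le_setNorm (bddAbove_norm_image_conjBy hS g₀) ht).trans hg₀.le) hs hsN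
  have : N ≤ N / 2 := (minNorm_le_setNorm S (g * g₀)).trans <| setNorm_le (by positivity) <| by
    rintro _ ⟨t, ht, rfl⟩
    rw [← conjBy_conjBy]
    exact hg _ (mem_image_of_mem _ ht)
  linarith
end
end

section
/- There exist constants C₁, C₂ > 0 such that for every finite subset S of SL(2,ℤ) generating a subgroup that is not virtually solvable, and every g ∈ SL(2,ℝ), one has sup_{s ∈ S} ‖g s g⁻¹‖ ≥ C₁ · (inf_{γ ∈ SL(2,ℤ)} ‖gγ‖)^{C₂}. -/
open scoped Pointwise
/-- `a` and `b` freely generate a free subgroup of rank 2: the homomorphism from the free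
group on two generators sending the generators to `a` and `b` is injective. -/
def FreelyGenerate {G : Type*} [Group G] (a b : G) : Prop :=
  Function.Injective (FreeGroup.lift (fun x : Bool => if x then a else b) : FreeGroup Bool →* G)

/-- A group is virtually solvable if it has a solvable subgroup of finite index. -/
def IsVirtuallySolvable (G : Type*) [Group G] : Prop :=
  ∃ H : Subgroup G, H.FiniteIndex ∧ IsSolvable H
noncomputable section

/-!
Let `v = g γ e₁` be a shortest nonzero vector of the unimodular lattice `g ℤ²` and complete it,
by Lagrange–Gauss reduction, to a basis `g γ` of the lattice. Hermite's inequality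
`‖v‖² ≤ 2 / √3` and `det (g γ) = 1` bound the second basis vector, so that
`‖g γ‖² ≤ (8 / 3) ‖v‖⁻²`. On the other hand, if `‖g s g⁻¹‖ < ‖v‖⁻²` then the integer
`det (γ e₁, s γ e₁) = det (v, g s g⁻¹ v)` has absolute value `< 1`, so `s` preserves the line
`ℝ γ e₁`. If this held for every `s ∈ S`, then `⟨S⟩` would lie in the stabilizer of a line in
`SL(2, ℝ)`, which is solvable (an extension of `ℝˣ` by the abelian group of transvections).
Hence `sup_{s ∈ S} ‖g s g⁻¹‖ ≥ ‖v‖⁻² ≥ (3 / 8) ‖g γ‖²`.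
-/

open Matrix Filter
open scoped MatrixGroups

section LineStabilizer

variable {K : Type*} [Field K]

lemma exists_eq_smul_of_mul_sub_mul_eq_zero {u w : Fin 2 → K} (hu : u ≠ 0)
    (h : u 0 * w 1 - u 1 * w 0 = 0) : ∃ c : K, w = c • u := by
  have hu' : u 0 ≠ 0 ∨ u 1 ≠ 0 := by
    by_contra! h0
    exact hu (funext fun i => by fin_cases i <;> simp [h0.1, h0.2])
  rcases hu' with h0 | h1
  · refine ⟨w 0 / u 0, funext <| Fin.forall_fin_two.mpr ⟨?_, ?_⟩⟩ <;>
      simp only [Pi.smul_apply, smul_eq_mul] <;> rw [div_mul_eq_mul_div, eq_div_iff h0]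
    linear_combination h
  · refine ⟨w 1 / u 1, funext <| Fin.forall_fin_two.mpr ⟨?_, ?_⟩⟩ <;>
      simp only [Pi.smul_apply, smul_eq_mul] <;> rw [div_mul_eq_mul_div, eq_div_iff h1]
    linear_combination -h

namespace Matrix.SpecialLinearGroup

/-- `det (u, A x) = det (A u, A x) = det (u, x)`, so `A x - x` is proportional to `u`. -/
lemma exists_smul_eq_add_smul {A : SpecialLinearGroup (Fin 2) K}
    {u : Fin 2 → K} (hu : u ≠ 0) (hAu : A • u = u) (x : Fin 2 → K) :
    ∃ c : K, A • x = x + c • u := by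
  have hA : A.1.det = 1 := A.2
  have h0 := congrFun hAu 0
  have h1 := congrFun hAu 1
  simp only [SpecialLinearGroup.smul_def, smul_eq_mulVec, mulVec, dotProduct,
    Fin.sum_univ_two] at h0 h1
  rw [det_fin_two] at hA
  obtain ⟨c, hc⟩ := exists_eq_smul_of_mul_sub_mul_eq_zero hu (w := A • x - x) (by
    simp only [SpecialLinearGroup.smul_def, smul_eq_mulVec, mulVec, dotProduct,
      Fin.sum_univ_two, Pi.sub_apply]
    linear_combination -(A 1 0 * x 0 + A 1 1 * x 1) * h0 + (A 0 0 * x 0 + A 0 1 * x 1) * h1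
      + (u 0 * x 1 - u 1 * x 0) * hA)
  exact ⟨c, by rw [← hc, add_sub_cancel]⟩

lemma commute_of_smul_eq_self {A B : SpecialLinearGroup (Fin 2) K}
    {u : Fin 2 → K} (hu : u ≠ 0) (hAu : A • u = u) (hBu : B • u = u) : Commute A B := by
  refine Subtype.ext <| ext_iff_mulVec.mpr fun x => ?_
  obtain ⟨a, ha⟩ := A.exists_smul_eq_add_smul hu hAu x
  obtain ⟨b, hb⟩ := B.exists_smul_eq_add_smul hu hBu x
  change (A * B) • x = (B * A) • x
  simp only [mul_smul, ha, hb, smul_add, smul_comm _ (_ : K), hAu, hBu]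
  abel

end Matrix.SpecialLinearGroup

def lineStabilizer (u : Fin 2 → K) : Subgroup (SpecialLinearGroup (Fin 2) K) where
  carrier := {s | ∃ c : K, s • u = c • u}
  one_mem' := ⟨1, by simp⟩
  mul_mem' := by
    rintro s t ⟨a, ha⟩ ⟨b, hb⟩
    exact ⟨b * a, by rw [mul_smul, hb, smul_comm, ha, smul_smul]⟩
  inv_mem' := by
    rintro s ⟨a, ha⟩
    have h : a • s⁻¹ • u = u := by rw [← smul_comm, ← ha, inv_smul_smul]
    rcases eq_or_ne a 0 with rfl | ha0
    · rw [zero_smul] at h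
      exact ⟨0, by simp [← h]⟩
    · exact ⟨a⁻¹, (eq_inv_smul_iff₀ ha0).mpr h⟩

variable {u : Fin 2 → K}

lemma mem_lineStabilizer {s : SpecialLinearGroup (Fin 2) K} :
    s ∈ lineStabilizer u ↔ ∃ c : K, s • u = c • u :=
  Iff.rfl

def lineStabilizer.eigenvalue (hu : u ≠ 0) : lineStabilizer u →* K where
  toFun s := (mem_lineStabilizer.mp s.2).choose
  map_one' := smul_left_injective K hu <| by
    change _ • u = (1 : K) • u
    rw [← (mem_lineStabilizer.mp (1 : lineStabilizer u).2).choose_spec, one_smul,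
      Subgroup.coe_one, one_smul]
  map_mul' s t := smul_left_injective K hu <| by
    obtain ⟨hs, ht⟩ := And.intro (mem_lineStabilizer.mp s.2).choose_spec
      (mem_lineStabilizer.mp t.2).choose_spec
    change _ • u = (_ * _ : K) • u
    generalize (mem_lineStabilizer.mp s.2).choose = a at hs ⊢
    generalize (mem_lineStabilizer.mp t.2).choose = b at ht ⊢
    rw [← (mem_lineStabilizer.mp (s * t).2).choose_spec, Subgroup.coe_mul, mul_smul, ht,
      smul_comm (s : SpecialLinearGroup (Fin 2) K), hs, smul_smul, mul_comm]

lemma lineStabilizer.smul_eq_eigenvalue_smul (hu : u ≠ 0) (s : lineStabilizer u) :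
    (s : SpecialLinearGroup (Fin 2) K) • u = eigenvalue hu s • u :=
  (mem_lineStabilizer.mp s.2).choose_spec

theorem isSolvable_lineStabilizer (hu : u ≠ 0) : Group.IsSolvable (lineStabilizer u) := by
  let χ := (lineStabilizer.eigenvalue hu).toHomUnits
  have hfix (s : χ.ker) : (s : SpecialLinearGroup (Fin 2) K) • u = u := by
    have hs : lineStabilizer.eigenvalue hu s = 1 := congrArg Units.val s.2
    rw [lineStabilizer.smul_eq_eigenvalue_smul hu, hs, one_smul]
  have : Group.IsSolvable χ.ker := Group.isSolvable_of_comm fun s t =>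
    Subtype.ext <| Subtype.ext <| SpecialLinearGroup.commute_of_smul_eq_self hu (hfix s) (hfix t)
  exact Group.isSolvable_of_ker_le_range χ.ker.subtype χ χ.ker.range_subtype.ge

end LineStabilizer

lemma norm_toLp_sq (x : Fin 2 → ℝ) : ‖WithLp.toLp 2 x‖ ^ 2 = x ⬝ᵥ x := by
  rw [EuclideanSpace.real_norm_sq_eq]
  simp [dotProduct, sq]

lemma dotProduct_self_nonneg {n : Type*} [Fintype n] (v : n → ℝ) : 0 ≤ v ⬝ᵥ v := by
  simpa using dotProduct_self_star_nonneg v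

lemma opNorm_nonneg (A : Matrix (Fin 2) (Fin 2) ℝ) : 0 ≤ opNorm A := norm_nonneg _

lemma mulVec_dotProduct_mulVec_le (A : Matrix (Fin 2) (Fin 2) ℝ) (x : Fin 2 → ℝ) :
    (A *ᵥ x) ⬝ᵥ (A *ᵥ x) ≤ opNorm A ^ 2 * (x ⬝ᵥ x) := by
  have h := (LinearMap.toContinuousLinearMap (toEuclideanLin A)).le_opNorm (WithLp.toLp 2 x)
  rw [← norm_toLp_sq, ← norm_toLp_sq, ← mul_pow]
  exact pow_le_pow_left₀ (norm_nonneg _) h 2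

lemma opNorm_le_of_mulVec_dotProduct_mulVec_le {A : Matrix (Fin 2) (Fin 2) ℝ} {C : ℝ}
    (hC : 0 ≤ C) (h : ∀ x, (A *ᵥ x) ⬝ᵥ (A *ᵥ x) ≤ C ^ 2 * (x ⬝ᵥ x)) : opNorm A ≤ C := by
  refine ContinuousLinearMap.opNorm_le_bound _ hC fun x => ?_
  have hx := h x.ofLp
  rw [← norm_toLp_sq, ← norm_toLp_sq, WithLp.toLp_ofLp, ← mul_pow] at hx
  exact (pow_le_pow_iff_left₀ (norm_nonneg _) (by positivity) two_ne_zero).mp hx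

lemma opNorm_sq_le (A : Matrix (Fin 2) (Fin 2) ℝ) :
    opNorm A ^ 2 ≤ Aᵀ 0 ⬝ᵥ Aᵀ 0 + Aᵀ 1 ⬝ᵥ Aᵀ 1 := by
  have hF : 0 ≤ Aᵀ 0 ⬝ᵥ Aᵀ 0 + Aᵀ 1 ⬝ᵥ Aᵀ 1 :=
    add_nonneg (dotProduct_self_nonneg _) (dotProduct_self_nonneg _)
  rw [← Real.sq_sqrt hF]
  refine pow_le_pow_left₀ (opNorm_nonneg A) ?_ 2
  refine opNorm_le_of_mulVec_dotProduct_mulVec_le (Real.sqrt_nonneg _) fun x => ?_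
  rw [Real.sq_sqrt hF]
  simp only [dotProduct, mulVec, Fin.sum_univ_two, transpose_apply]
  nlinarith [sq_nonneg (A 0 0 * x 1 - A 0 1 * x 0), sq_nonneg (A 1 0 * x 1 - A 1 1 * x 0)]

lemma dotProduct_self_mul_dotProduct_self (u v : Fin 2 → ℝ) :
    (u ⬝ᵥ u) * (v ⬝ᵥ v) = (u ⬝ᵥ v) ^ 2 + cross u v ^ 2 := by
  simp only [dotProduct, Fin.sum_univ_two, cross]
  ring

lemma cross_mulVec (A : Matrix (Fin 2) (Fin 2) ℝ) (u v : Fin 2 → ℝ) :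
    cross (A *ᵥ u) (A *ᵥ v) = A.det * cross u v := by
  simp only [cross, mulVec, dotProduct, Fin.sum_univ_two, det_fin_two]
  ring

lemma exists_int_two_mul_abs_dotProduct_add_smul_le {n : Type*} [Fintype n] (v x : n → ℝ) :
    ∃ k : ℤ, 2 * |v ⬝ᵥ (x + (k : ℝ) • v)| ≤ v ⬝ᵥ v := by
  rcases eq_or_ne (v ⬝ᵥ v) 0 with hv | hv
  · exact ⟨0, by simp [dotProduct_self_eq_zero.mp hv]⟩
  have hv' : 0 < v ⬝ᵥ v := (dotProduct_self_nonneg v).lt_of_ne' hv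
  set t := v ⬝ᵥ x / v ⬝ᵥ v
  refine ⟨-round t, ?_⟩
  have : v ⬝ᵥ (x + ((-round t : ℤ) : ℝ) • v) = (t - round t) * v ⬝ᵥ v := by
    rw [dotProduct_add, dotProduct_smul, smul_eq_mul, sub_mul, div_mul_cancel₀ _ hv]
    push_cast; ring
  rw [this, abs_mul, abs_of_pos hv']
  nlinarith [abs_sub_round t]

lemma toReal_mul (γ δ : SL(2, ℤ)) : toReal (γ * δ) = toReal γ * toReal δ :=
  Matrix.map_mul (f := Int.castRingHom ℝ)

lemma det_toReal (γ : SL(2, ℤ)) : (toReal γ).det = 1 := (γ : SL(2, ℝ)).2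

lemma mul_toReal_transpose_apply (G : Matrix (Fin 2) (Fin 2) ℝ) (γ : SL(2, ℤ)) (j : Fin 2) :
    (G * toReal γ)ᵀ j = G *ᵥ (Int.cast ∘ (γ : Matrix (Fin 2) (Fin 2) ℤ)ᵀ j) := by
  ext i
  simp [toReal, mul_apply, mulVec, dotProduct]

lemma tendsto_mulVec_intCast_dotProduct_cofinite {G : Matrix (Fin 2) (Fin 2) ℝ}
    (hG : IsUnit G.det) :
    Tendsto (fun p : Fin 2 → ℤ => (G *ᵥ (Int.cast ∘ p)) ⬝ᵥ (G *ᵥ (Int.cast ∘ p)))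
      cofinite atTop := by
  refine tendsto_atTop.mpr fun b => eventually_cofinite.mpr ?_
  refine (isCompact_closedBall (0 : Fin 2 → ℤ) √(opNorm G⁻¹ ^ 2 * b)).finite_of_discrete.subset
    fun p hp => ?_
  have hbound : (Int.cast ∘ p : Fin 2 → ℝ) ⬝ᵥ (Int.cast ∘ p) ≤ opNorm G⁻¹ ^ 2 * b := by
    have h := mulVec_dotProduct_mulVec_le G⁻¹ (G *ᵥ (Int.cast ∘ p))
    rw [mulVec_mulVec, nonsing_inv_mul G hG, one_mulVec] at h
    exact h.trans (mul_le_mul_of_nonneg_left (not_le.mp hp).le (sq_nonneg _))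
  rw [mem_closedBall_zero_iff, pi_norm_le_iff_of_nonneg (Real.sqrt_nonneg _)]
  intro i
  rw [Int.norm_eq_abs]
  refine Real.abs_le_sqrt (le_trans ?_ hbound)
  fin_cases i <;> simp [dotProduct, Fin.sum_univ_two, ← sq] <;> positivity

lemma exists_forall_mul_toReal_transpose_dotProduct_le {G : Matrix (Fin 2) (Fin 2) ℝ}
    (hG : IsUnit G.det) :
    ∃ γ : SL(2, ℤ), ∀ δ : SL(2, ℤ),
      (G * toReal γ)ᵀ 0 ⬝ᵥ (G * toReal γ)ᵀ 0 ≤ (G * toReal δ)ᵀ 0 ⬝ᵥ (G * toReal δ)ᵀ 0 := by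
  obtain ⟨_, ⟨γ, rfl⟩, hγ⟩ :=
    (tendsto_mulVec_intCast_dotProduct_cofinite hG).exists_within_forall_le
      (Set.range_nonempty fun δ : SL(2, ℤ) => (δ : Matrix (Fin 2) (Fin 2) ℤ)ᵀ 0)
  refine ⟨γ, fun δ => ?_⟩
  simpa only [mul_toReal_transpose_apply] using hγ _ ⟨δ, rfl⟩

def IsGaussReduced (M : Matrix (Fin 2) (Fin 2) ℝ) : Prop :=
  Mᵀ 0 ⬝ᵥ Mᵀ 0 ≤ Mᵀ 1 ⬝ᵥ Mᵀ 1 ∧ 2 * |Mᵀ 0 ⬝ᵥ Mᵀ 1| ≤ Mᵀ 0 ⬝ᵥ Mᵀ 0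

lemma exists_isGaussReduced_mul_toReal {G : Matrix (Fin 2) (Fin 2) ℝ} (hG : IsUnit G.det) :
    ∃ γ : SL(2, ℤ), IsGaussReduced (G * toReal γ) := by
  obtain ⟨γ₀, hγ₀⟩ := exists_forall_mul_toReal_transpose_dotProduct_le hG
  set M := G * toReal γ₀
  obtain ⟨k, hk⟩ := exists_int_two_mul_abs_dotProduct_add_smul_le (Mᵀ 0) (Mᵀ 1)
  have hT : G * toReal (γ₀ * ModularGroup.T ^ k) = M * !![1, (k : ℝ); 0, 1] := by
    rw [toReal_mul, ← mul_assoc]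
    congr 1
    ext i j
    fin_cases i <;> fin_cases j <;> simp [toReal, ModularGroup.coe_T_zpow]
  have hS (δ : SL(2, ℤ)) : (G * toReal (δ * ModularGroup.S))ᵀ 0 = (G * toReal δ)ᵀ 1 := by
    ext i
    simp [mul_apply, Fin.sum_univ_two, toReal, ModularGroup.coe_S]
  have h0 : (M * !![1, (k : ℝ); 0, 1])ᵀ 0 = Mᵀ 0 := by
    ext i; simp [mul_apply, Fin.sum_univ_two]
  have h1 : (M * !![1, (k : ℝ); 0, 1])ᵀ 1 = Mᵀ 1 + (k : ℝ) • Mᵀ 0 := by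
    ext i; simp [mul_apply, Fin.sum_univ_two]; ring
  refine ⟨γ₀ * ModularGroup.T ^ k, ?_, ?_⟩
  · rw [← hS, hT, h0]
    exact hγ₀ _
  · rw [hT, h0, h1]
    exact hk

lemma IsGaussReduced.three_div_eight_mul_opNorm_sq_le {M : Matrix (Fin 2) (Fin 2) ℝ}
    (hM : IsGaussReduced M) (hdet : M.det = 1) :
    3 / 8 * opNorm M ^ 2 ≤ (Mᵀ 0 ⬝ᵥ Mᵀ 0)⁻¹ := by
  obtain ⟨hshort, hdot⟩ := hM
  have hcross : cross (Mᵀ 0) (Mᵀ 1) = 1 := by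
    rw [← hdet, det_fin_two]; simp [cross]; ring
  have hlag := dotProduct_self_mul_dotProduct_self (Mᵀ 0) (Mᵀ 1)
  rw [hcross] at hlag
  set a := Mᵀ 0 ⬝ᵥ Mᵀ 0
  set b := Mᵀ 1 ⬝ᵥ Mᵀ 1
  set d := Mᵀ 0 ⬝ᵥ Mᵀ 1
  have ha : 0 < a := by
    nlinarith [dotProduct_self_nonneg (Mᵀ 0), dotProduct_self_nonneg (Mᵀ 1), sq_nonneg d]
  have hd : 4 * d ^ 2 ≤ a ^ 2 := by nlinarith [sq_abs d, abs_nonneg d]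
  -- Hermite's bound `a ≤ 2 / √3` for a unimodular lattice
  have ha2 : a ^ 2 ≤ 4 / 3 := by nlinarith [mul_le_mul_of_nonneg_left hshort ha.le]
  rw [← one_div, le_div_iff₀ ha]
  calc 3 / 8 * opNorm M ^ 2 * a ≤ 3 / 8 * ((a + b) * a) := by
        rw [mul_assoc]; gcongr; exact opNorm_sq_le M
    _ ≤ 1 := by nlinarith

/-- `det (p, s p)` is an integer, and it equals `det (g p, (g s g⁻¹) (g p))`, whose absolute
value is at most `‖g s g⁻¹‖ ‖g p‖² < 1`. -/
lemma intCast_mem_lineStabilizer_of_opNorm_conj_lt (g : SL(2, ℝ)) (s : SL(2, ℤ))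
    {p : Fin 2 → ℤ} (hp : (Int.cast ∘ p : Fin 2 → ℝ) ≠ 0)
    (h : opNorm ((g * s * g⁻¹ : SL(2, ℝ)) : Matrix (Fin 2) (Fin 2) ℝ) <
      (g • (Int.cast ∘ p : Fin 2 → ℝ) ⬝ᵥ g • (Int.cast ∘ p : Fin 2 → ℝ))⁻¹) :
    (s : SL(2, ℝ)) ∈ lineStabilizer (Int.cast ∘ p : Fin 2 → ℝ) := by
  set u : Fin 2 → ℝ := Int.cast ∘ p
  set v := g • u
  set A : Matrix (Fin 2) (Fin 2) ℝ := ((g * s * g⁻¹ : SL(2, ℝ)) : Matrix (Fin 2) (Fin 2) ℝ)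
  have hv : 0 < v ⬝ᵥ v := inv_pos.mp ((opNorm_nonneg A).trans_lt h)
  have hAv : A *ᵥ v = g • (s : SL(2, ℝ)) • u := by
    change (g * s * g⁻¹ : SL(2, ℝ)) • g • u = _
    rw [smul_smul, inv_mul_cancel_right, mul_smul]
  have hcross : cross u ((s : SL(2, ℝ)) • u) = cross v (A *ᵥ v) := by
    rw [hAv]
    change _ = cross ((g : Matrix (Fin 2) (Fin 2) ℝ) *ᵥ u) ((g : Matrix (Fin 2) (Fin 2) ℝ) *ᵥ _)
    rw [cross_mulVec, g.2, one_mul]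
  have hsmall : cross v (A *ᵥ v) ^ 2 < 1 := by
    have hAv1 : opNorm A * (v ⬝ᵥ v) < 1 := by
      have := mul_lt_mul_of_pos_right h hv
      rwa [inv_mul_cancel₀ hv.ne'] at this
    calc cross v (A *ᵥ v) ^ 2 ≤ (v ⬝ᵥ v) * (A *ᵥ v ⬝ᵥ A *ᵥ v) := by
          nlinarith [dotProduct_self_mul_dotProduct_self v (A *ᵥ v), sq_nonneg (v ⬝ᵥ A *ᵥ v)]
      _ ≤ (v ⬝ᵥ v) * (opNorm A ^ 2 * (v ⬝ᵥ v)) :=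
          mul_le_mul_of_nonneg_left (mulVec_dotProduct_mulVec_le A v) hv.le
      _ = (opNorm A * (v ⬝ᵥ v)) ^ 2 := by ring
      _ < 1 := pow_lt_one₀ (mul_nonneg (opNorm_nonneg A) hv.le) hAv1 two_ne_zero
  set q := (s : Matrix (Fin 2) (Fin 2) ℤ) *ᵥ p
  have hint : cross u ((s : SL(2, ℝ)) • u) = ((p 0 * q 1 - p 1 * q 0 : ℤ) : ℝ) := by
    change cross u (toReal s *ᵥ u) = _
    simp [cross, u, q, toReal, mulVec, dotProduct]
  rw [← hcross, hint, ← Int.cast_pow] at hsmall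
  have hzero : p 0 * q 1 - p 1 * q 0 = 0 := by
    rw [← Int.abs_lt_one_iff, ← sq_lt_one_iff_abs_lt_one]
    exact_mod_cast hsmall
  rw [hzero, Int.cast_zero] at hint
  exact exists_eq_smul_of_mul_sub_mul_eq_zero hp hint

lemma isVirtuallySolvable_of_isSolvable (G : Type*) [Group G] [Group.IsSolvable G] :
    IsVirtuallySolvable G :=
  ⟨⊤, inferInstance, (inferInstance : Group.IsSolvable (⊤ : Subgroup G))⟩

lemma isSolvable_of_le_comap_lineStabilizer {K : Type*} [Field K] [CharZero K]
    {u : Fin 2 → K} (hu : u ≠ 0) {H : Subgroup SL(2, ℤ)}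
    (hH : H ≤ (lineStabilizer u).comap (SpecialLinearGroup.map (Int.castRingHom K))) :
    Group.IsSolvable H := by
  have := isSolvable_lineStabilizer hu
  refine Group.isSolvable_of_isSolvable_injective
    (f := (MonoidHom.subgroupComap _ _).comp (Subgroup.inclusion hH)) fun a b hab => ?_
  exact Subtype.ext (SpecialLinearGroup.map_intCast_injective (congrArg Subtype.val hab))

/-- For every finite subset `S ⊂ SL(2,ℤ)` generating a non-virtually solvable subgroup and
every `g ∈ SL(2,ℝ)`, `sup_{s ∈ S} ‖g s g⁻¹‖ ≥ C₁ (inf_{γ ∈ SL(2,ℤ)} ‖gγ‖)^{C₂}` for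
absolute constants `C₁, C₂ > 0`. -/
theorem arithmetic_norm_lower_bound :
    ∃ C₁ C₂ : ℝ, 0 < C₁ ∧ 0 < C₂ ∧
      ∀ S : Set (Matrix.SpecialLinearGroup (Fin 2) ℤ), S.Finite →
        ¬ IsVirtuallySolvable (Subgroup.closure S) →
        ∀ g : Matrix.SpecialLinearGroup (Fin 2) ℝ,
          C₁ * (⨅ γ : Matrix.SpecialLinearGroup (Fin 2) ℤ,
                  opNorm ((g * Matrix.SpecialLinearGroup.map (Int.castRingHom ℝ) γ :
                    Matrix.SpecialLinearGroup (Fin 2) ℝ) : Matrix (Fin 2) (Fin 2) ℝ)) ^ C₂ ≤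
            sSup {x : ℝ | ∃ s ∈ S,
              x = opNorm ((g * Matrix.SpecialLinearGroup.map (Int.castRingHom ℝ) s * g⁻¹ :
                Matrix.SpecialLinearGroup (Fin 2) ℝ) : Matrix (Fin 2) (Fin 2) ℝ)} := by
  refine ⟨3 / 8, 2, by norm_num, by norm_num, fun S hS hns g => ?_⟩
  set f := fun s : SL(2, ℤ) => opNorm ((g * s * g⁻¹ : SL(2, ℝ)) : Matrix (Fin 2) (Fin 2) ℝ)
  obtain ⟨γ, hγ⟩ := exists_isGaussReduced_mul_toReal (G := g) (by simp [g.2])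
  have hbound := hγ.three_div_eight_mul_opNorm_sq_le (by rw [det_mul, g.2, det_toReal, one_mul])
  rw [mul_toReal_transpose_apply] at hbound
  set u : Fin 2 → ℝ := Int.cast ∘ (γ : Matrix (Fin 2) (Fin 2) ℤ)ᵀ 0
  have hu : u ≠ 0 := fun h => one_ne_zero <|
    (det_toReal γ).symm.trans (det_eq_zero_of_column_eq_zero 0 fun i => congrFun h i)
  have hsup : (g • u ⬝ᵥ g • u)⁻¹ ≤ sSup {x : ℝ | ∃ s ∈ S, x = f s} := by
    by_contra! hlt
    have hbdd : BddAbove {x : ℝ | ∃ s ∈ S, x = f s} :=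
      ((hS.image f).subset <| by rintro _ ⟨s, hs, rfl⟩; exact ⟨s, hs, rfl⟩).bddAbove
    have := isSolvable_of_le_comap_lineStabilizer hu (Subgroup.closure_le _ |>.mpr fun s hs =>
      intCast_mem_lineStabilizer_of_opNorm_conj_lt g s hu
        ((le_csSup hbdd ⟨s, hs, rfl⟩).trans_lt hlt))
    exact hns (isVirtuallySolvable_of_isSolvable _)
  calc _ ≤ 3 / 8 * opNorm (g * toReal γ) ^ 2 := by
        rw [Real.rpow_two]
        gcongr
        · exact Real.iInf_nonneg fun _ => opNorm_nonneg _
        · exact ciInf_le ⟨0, by rintro _ ⟨_, rfl⟩; exact opNorm_nonneg _⟩ γ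
    _ ≤ _ := hbound
    _ ≤ _ := hsup
end
end

section
/- Let G be a group acting on a set X and let a, b ∈ G. If there exist four pairwise disjoint nonempty subsets A⁺, A⁻, B⁺, B⁻ of X such that a·(X ∖ A⁻) ⊆ A⁺ and b·(X ∖ B⁻) ⊆ B⁺, then a and b freely generate a free subgroup of rank 2 of G. -/
open scoped Pointwise
universe u

theorem inv_smul_compl_subset_of_smul_compl_subset {G X : Type*} [Group G] [MulAction G X]
    {g : G} {s t : Set X} (h : g • sᶜ ⊆ t) : g⁻¹ • tᶜ ⊆ s := by
  rwa [Set.smul_set_subset_iff_subset_inv_smul_set, inv_inv, Set.compl_subset_comm,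
    ← Set.smul_set_compl]

/-- `FreeGroup.injective_lift_of_ping_pong` needs the index type in the universe of the group,
hence the `ULift`. -/
theorem freelyGenerate_iff_injective_lift_ulift {G : Type u} [Group G] (a b : G) :
    FreelyGenerate a b ↔
      Function.Injective (FreeGroup.lift fun i : ULift.{u} Bool => if i.down then a else b) := by
  have hlift : FreeGroup.lift (fun x : Bool => if x then a else b) =
      (FreeGroup.lift fun i : ULift.{u} Bool => if i.down then a else b).comp
        (FreeGroup.freeGroupCongr Equiv.ulift.symm).toMonoidHom := by
    ext x
    cases x <;> simp [Equiv.ulift]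
  rw [FreelyGenerate, hlift, MonoidHom.coe_comp, MulEquiv.coe_toMonoidHom,
    EquivLike.injective_comp]

open scoped Pointwise in
theorem abstract_ping_pong_general {G X : Type*} [Group G] [MulAction G X] (a b : G)
    (Ap Am Bp Bm : Set X)
    (hAp : Ap.Nonempty) (hBp : Bp.Nonempty)
    (h₁ : Disjoint Ap Am) (h₂ : Disjoint Ap Bp) (h₃ : Disjoint Ap Bm)
    (h₄ : Disjoint Am Bp) (h₅ : Disjoint Am Bm) (h₆ : Disjoint Bp Bm)
    (ha : a • (Set.univ \ Am) ⊆ Ap) (hb : b • (Set.univ \ Bm) ⊆ Bp) :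
    FreelyGenerate a b := by
  rw [← Set.compl_eq_univ_sdiff] at ha hb
  rw [freelyGenerate_iff_injective_lift_ulift]
  refine FreeGroup.injective_lift_of_ping_pong _
    (fun i => if i.down then Ap else Bp) (fun i => if i.down then Am else Bm) ?_ ?_ ?_ ?_ ?_ ?_
  · rintro ⟨_ | _⟩
    exacts [hBp, hAp]
  · rintro ⟨_ | _⟩ ⟨_ | _⟩ hij
    exacts [absurd rfl hij, h₂.symm, h₂, absurd rfl hij]
  · rintro ⟨_ | _⟩ ⟨_ | _⟩ hij
    exacts [absurd rfl hij, h₅.symm, h₅, absurd rfl hij]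
  · rintro ⟨_ | _⟩ ⟨_ | _⟩
    exacts [h₆, h₄.symm, h₃, h₁]
  · rintro ⟨_ | _⟩
    exacts [hb, ha]
  · rintro ⟨_ | _⟩
    exacts [inv_smul_compl_subset_of_smul_compl_subset hb,
      inv_smul_compl_subset_of_smul_compl_subset ha]

open scoped Pointwise in
/-- **Abstract Ping-Pong Lemma.** If `a (X ∖ A⁻) ⊆ A⁺` and `b (X ∖ B⁻) ⊆ B⁺` for four
pairwise disjoint nonempty subsets `A⁺, A⁻, B⁺, B⁻` of `X`, then `a` and `b` freely generate
a free subgroup of rank 2. -/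
theorem abstract_ping_pong {G X : Type*} [Group G] [MulAction G X] (a b : G)
    (Ap Am Bp Bm : Set X)
    (hAp : Ap.Nonempty) (hAm : Am.Nonempty) (hBp : Bp.Nonempty) (hBm : Bm.Nonempty)
    (h₁ : Disjoint Ap Am) (h₂ : Disjoint Ap Bp) (h₃ : Disjoint Ap Bm)
    (h₄ : Disjoint Am Bp) (h₅ : Disjoint Am Bm) (h₆ : Disjoint Bp Bm)
    (ha : a • (Set.univ \ Am) ⊆ Ap) (hb : b • (Set.univ \ Bm) ⊆ Bp) :
    FreelyGenerate a b :=
  abstract_ping_pong_general a b Ap Am Bp Bm hAp hBp h₁ h₂ h₃ h₄ h₅ h₆ ha hb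
end

section
/- Let u, v ∈ ℝ² be nonzero, let z₁ ≠ z₂ be points of ℝ², and let ε₁, ε₂ ≥ 0 with ε₁ + ε₂ < d([u],[v]). If z ∈ ℝ² satisfies z ≠ z₁, z ≠ z₂, d([z − z₁],[u]) ≤ ε₁, and d([z − z₂],[v]) ≤ ε₂, then ‖z − z₁‖ ≤ ‖z₂ − z₁‖ / (d([u],[v]) − (ε₁ + ε₂)). -/
open scoped Pointwise
noncomputable section

/-! The direction `z - z₁` is `ε₁`-close to `u` and `z - z₂` is `ε₂`-close to `v`, so by the
triangle inequality for `pdist` the two directions seen from `z` are at least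
`d([u],[v]) - (ε₁ + ε₂)` apart. On the other hand
`cross (z - z₁) (z - z₂) = cross (z₂ - z₁) (z - z₂)`, so that distance is at most
`‖z₂ - z₁‖ / ‖z - z₁‖`: far from the base points, the two directions from `z` are nearly
parallel. -/

lemma enorm2_nonneg (u : Fin 2 → ℝ) : 0 ≤ enorm2 u := Real.sqrt_nonneg _

lemma enorm2_mul_enorm2 (u v : Fin 2 → ℝ) :
    enorm2 u * enorm2 v = Real.sqrt ((u 0 ^ 2 + u 1 ^ 2) * (v 0 ^ 2 + v 1 ^ 2)) :=
  (Real.sqrt_mul (by positivity) _).symm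

lemma enorm2_mul_self (u : Fin 2 → ℝ) : enorm2 u * enorm2 u = u 0 ^ 2 + u 1 ^ 2 :=
  Real.mul_self_sqrt (by positivity)

lemma enorm2_ne_zero {u : Fin 2 → ℝ} (hu : u ≠ 0) : enorm2 u ≠ 0 := by
  intro h
  have hsq : u 0 ^ 2 + u 1 ^ 2 = 0 := by rw [← enorm2_mul_self, h, zero_mul]
  obtain ⟨h0, h1⟩ := (add_eq_zero_iff_of_nonneg (sq_nonneg _) (sq_nonneg _)).mp hsq
  exact hu (funext (Fin.forall_fin_two.mpr
    ⟨(pow_eq_zero_iff two_ne_zero).mp h0, (pow_eq_zero_iff two_ne_zero).mp h1⟩))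

lemma cross_sq_add_dotProduct_sq (u v : Fin 2 → ℝ) :
    cross u v ^ 2 + (u ⬝ᵥ v) ^ 2 = (u 0 ^ 2 + u 1 ^ 2) * (v 0 ^ 2 + v 1 ^ 2) := by
  simp only [cross, dotProduct, Fin.sum_univ_two]
  ring

lemma abs_cross_le (u v : Fin 2 → ℝ) : |cross u v| ≤ enorm2 u * enorm2 v := by
  rw [enorm2_mul_enorm2, ← cross_sq_add_dotProduct_sq]
  exact Real.abs_le_sqrt (le_add_of_nonneg_right (sq_nonneg _))

lemma abs_dotProduct_le (u v : Fin 2 → ℝ) : |u ⬝ᵥ v| ≤ enorm2 u * enorm2 v := by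
  rw [enorm2_mul_enorm2, ← cross_sq_add_dotProduct_sq]
  exact Real.abs_le_sqrt (le_add_of_nonneg_left (sq_nonneg _))

lemma cross_swap (u v : Fin 2 → ℝ) : cross v u = -cross u v := by
  simp only [cross]
  ring

/-- Expanding `v` in the frame `(w, w⊥)`. -/
lemma cross_mul_enorm2_sq (u v w : Fin 2 → ℝ) :
    cross u v * (enorm2 w * enorm2 w) = cross u w * (w ⬝ᵥ v) + (u ⬝ᵥ w) * cross w v := by
  simp only [enorm2_mul_self, cross, dotProduct, Fin.sum_univ_two]
  ring

lemma pdist_nonneg (u v : Fin 2 → ℝ) : 0 ≤ pdist u v :=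
  div_nonneg (abs_nonneg _) (mul_nonneg (enorm2_nonneg u) (enorm2_nonneg v))

lemma pdist_comm (u v : Fin 2 → ℝ) : pdist u v = pdist v u := by
  rw [pdist, pdist, cross_swap, abs_neg, mul_comm]

lemma pdist_triangle (u v : Fin 2 → ℝ) {w : Fin 2 → ℝ} (hw : w ≠ 0) :
    pdist u v ≤ pdist u w + pdist w v := by
  by_cases huv : enorm2 u * enorm2 v = 0
  · rw [pdist, huv, div_zero]
    exact add_nonneg (pdist_nonneg u w) (pdist_nonneg w v)
  have hu : enorm2 u ≠ 0 := left_ne_zero_of_mul huv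
  have hv : enorm2 v ≠ 0 := right_ne_zero_of_mul huv
  have hw' := enorm2_ne_zero hw
  have hmain : |cross u v| * (enorm2 w * enorm2 w) ≤
      |cross u w| * (enorm2 w * enorm2 v) + (enorm2 u * enorm2 w) * |cross w v| := by
    rw [← abs_of_nonneg (mul_self_nonneg (enorm2 w)), ← abs_mul, cross_mul_enorm2_sq]
    refine (abs_add_le _ _).trans ?_
    rw [abs_mul, abs_mul]
    gcongr
    exacts [abs_dotProduct_le w v, abs_dotProduct_le u w]
  calc pdist u v = |cross u v| * (enorm2 w * enorm2 w) /
        (enorm2 u * enorm2 v * (enorm2 w * enorm2 w)) := by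
        rw [pdist, mul_div_mul_right _ _ (mul_ne_zero hw' hw')]
    _ ≤ (|cross u w| * (enorm2 w * enorm2 v) + (enorm2 u * enorm2 w) * |cross w v|) /
        (enorm2 u * enorm2 v * (enorm2 w * enorm2 w)) := by
        gcongr
        exact mul_nonneg (mul_nonneg (enorm2_nonneg u) (enorm2_nonneg v)) (mul_self_nonneg _)
    _ = pdist u w + pdist w v := by
        rw [pdist, pdist]
        field_simp

lemma pdist_le_enorm2_sub_div (a b : Fin 2 → ℝ) : pdist a b ≤ enorm2 (a - b) / enorm2 a := by
  by_cases hb : enorm2 b = 0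
  · rw [pdist, hb, mul_zero, div_zero]
    exact div_nonneg (enorm2_nonneg _) (enorm2_nonneg _)
  have hcross : cross a b = cross (a - b) b := by
    simp only [cross, Pi.sub_apply]
    ring
  calc pdist a b ≤ enorm2 (a - b) * enorm2 b / (enorm2 a * enorm2 b) := by
        rw [pdist, hcross]
        gcongr
        exacts [mul_nonneg (enorm2_nonneg a) (enorm2_nonneg b), abs_cross_le _ _]
    _ = enorm2 (a - b) / enorm2 a := mul_div_mul_right _ _ hb

theorem intersection_distance_bound_general
    (u v : Fin 2 → ℝ)
    (z z₁ z₂ : Fin 2 → ℝ)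
    (ε₁ ε₂ : ℝ)
    (hlt : ε₁ + ε₂ < pdist u v)
    (hz1 : z ≠ z₁) (hz2 : z ≠ z₂)
    (hd1 : pdist (z - z₁) u ≤ ε₁) (hd2 : pdist (z - z₂) v ≤ ε₂) :
    enorm2 (z - z₁) ≤ enorm2 (z₂ - z₁) / (pdist u v - (ε₁ + ε₂)) := by
  have hδ : 0 < pdist u v - (ε₁ + ε₂) := sub_pos.mpr hlt
  have hz1' : 0 < enorm2 (z - z₁) :=
    (enorm2_nonneg _).lt_of_ne' (enorm2_ne_zero (sub_ne_zero.mpr hz1))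
  have hangle : pdist u v - (ε₁ + ε₂) ≤ pdist (z - z₁) (z - z₂) := by
    have h₁ := pdist_triangle u v (sub_ne_zero.mpr hz1)
    have h₂ := pdist_triangle (z - z₁) v (sub_ne_zero.mpr hz2)
    rw [pdist_comm u (z - z₁)] at h₁
    linarith
  have hsep : pdist (z - z₁) (z - z₂) ≤ enorm2 (z₂ - z₁) / enorm2 (z - z₁) := by
    simpa only [sub_sub_sub_cancel_left] using pdist_le_enorm2_sub_div (z - z₁) (z - z₂)
  rw [le_div_iff₀ hδ, mul_comm]
  exact (le_div_iff₀ hz1').mp (hangle.trans hsep)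

/-- If `z` lies `ε₁`-close (in projective distance) to the line through `z₁` directed by `u`
and `ε₂`-close to the line through `z₂` directed by `v`, with `ε₁ + ε₂ < d([u],[v])`, then
`‖z − z₁‖ ≤ ‖z₂ − z₁‖ / (d([u],[v]) − (ε₁ + ε₂))`. -/
theorem intersection_distance_bound
    (u v : Fin 2 → ℝ) (hu : u ≠ 0) (hv : v ≠ 0)
    (z z₁ z₂ : Fin 2 → ℝ) (h12 : z₁ ≠ z₂)
    (ε₁ ε₂ : ℝ) (hε₁ : 0 ≤ ε₁) (hε₂ : 0 ≤ ε₂)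
    (hlt : ε₁ + ε₂ < pdist u v)
    (hz1 : z ≠ z₁) (hz2 : z ≠ z₂)
    (hd1 : pdist (z - z₁) u ≤ ε₁) (hd2 : pdist (z - z₂) v ≤ ε₂) :
    enorm2 (z - z₁) ≤ enorm2 (z₂ - z₁) / (pdist u v - (ε₁ + ε₂)) :=
  intersection_distance_bound_general u v z z₁ z₂ ε₁ ε₂ hlt hz1 hz2 hd1 hd2
end
end

section
/- Let a be the diagonal 2×2 real matrix diag(λ₁, λ₂) with λ₁, λ₂ nonzero and |λ₁| ≥ |λ₂|. Then for every nonzero v ∈ ℝ², d([a v],[e₁]) · d([v],[e₂]) ≤ |λ₂| / |λ₁|, where e₁, e₂ are the standard basis vectors of ℝ². -/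
open scoped Pointwise
noncomputable section

lemma enorm2_vec_one_zero : enorm2 ![1, 0] = 1 := by simp [enorm2]

lemma enorm2_vec_zero_one : enorm2 ![0, 1] = 1 := by simp [enorm2]

lemma pdist_vec_one_zero (u : Fin 2 → ℝ) : pdist u ![1, 0] = |u 1| / enorm2 u := by
  simp [pdist, cross, enorm2_vec_one_zero]

lemma pdist_vec_zero_one (u : Fin 2 → ℝ) : pdist u ![0, 1] = |u 0| / enorm2 u := by
  simp [pdist, cross, enorm2_vec_zero_one]

lemma abs_apply_le_enorm2 (u : Fin 2 → ℝ) (i : Fin 2) : |u i| ≤ enorm2 u := by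
  rw [enorm2, ← Real.sqrt_sq_eq_abs]
  gcongr
  fin_cases i
  · exact le_add_of_nonneg_right (sq_nonneg _)
  · exact le_add_of_nonneg_left (sq_nonneg _)

lemma abs_apply_div_enorm2_le_one (u : Fin 2 → ℝ) (i : Fin 2) : |u i| / enorm2 u ≤ 1 :=
  div_le_one_of_le₀ (abs_apply_le_enorm2 u i) (enorm2_nonneg u)

theorem diagonal_contraction_general
    (l₁ l₂ : ℝ) (h₁ : l₁ ≠ 0)
    (v : Fin 2 → ℝ) :
    pdist ((Matrix.diagonal ![l₁, l₂]).mulVec v) ![1, 0] * pdist v ![0, 1] ≤ |l₂| / |l₁| := by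
  set u := (Matrix.diagonal ![l₁, l₂]).mulVec v
  have hu : u 0 = l₁ * v 0 ∧ u 1 = l₂ * v 1 := by simp [u]
  rw [pdist_vec_one_zero, pdist_vec_zero_one]
  calc |u 1| / enorm2 u * (|v 0| / enorm2 v)
      = |l₂| / |l₁| * (|u 0| / enorm2 u * (|v 1| / enorm2 v)) := by
        rw [hu.1, hu.2, abs_mul, abs_mul]
        field_simp
    _ ≤ |l₂| / |l₁| := by
        refine mul_le_of_le_one_right (by positivity) (mul_le_one₀ ?_ ?_ ?_)
        · exact abs_apply_div_enorm2_le_one u 0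
        · exact div_nonneg (abs_nonneg _) (enorm2_nonneg v)
        · exact abs_apply_div_enorm2_le_one v 1

/-- For a diagonal matrix `a = diag(λ₁, λ₂)` with `λ₁, λ₂ ≠ 0` and `|λ₁| ≥ |λ₂|`, and every
nonzero `v ∈ ℝ²`, `d([a v],[e₁]) · d([v],[e₂]) ≤ |λ₂|/|λ₁|`. -/
theorem diagonal_contraction
    (l₁ l₂ : ℝ) (h₁ : l₁ ≠ 0) (h₂ : l₂ ≠ 0) (hle : |l₂| ≤ |l₁|)
    (v : Fin 2 → ℝ) (hv : v ≠ 0) :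
    pdist ((Matrix.diagonal ![l₁, l₂]).mulVec v) ![1, 0] * pdist v ![0, 1] ≤ |l₂| / |l₁| :=
  diagonal_contraction_general l₁ l₂ h₁ v
end
end

section
/- Let a group G act on a measurable space (X, 𝔐) by measurable bijections, let S ⊆ G, and let n, m ≥ 1 be natural numbers. If X is (S, n+m)-paradoxical with measurable pieces, then for every finitely additive probability measure μ on 𝔐, sup_{g ∈ S} ‖g_*μ − μ‖_TV ≥ 1/(n+m); that is, the action is (S, (n+m)⁻¹)-non-amenable. -/
/-!
Write `δ` for the supremum of `|μ (s⁻¹ • C) - μ C|` over `s ∈ S` and measurable `C`, so that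
`μ (s • C) ≤ μ C + δ` for every `s ∈ S`. Covering `X` by the `n` translates `gᵢ • Aᵢ` and
subadditivity give `1 ≤ ∑ μ Aᵢ + n δ`, and likewise `1 ≤ ∑ μ Bⱼ + m δ`. Since the pieces are
pairwise disjoint, `∑ μ Aᵢ + ∑ μ Bⱼ ≤ 1`, hence `1 ≤ (n + m) δ`.
-/

open Function
open scoped Pointwise

section FinitelyAdditive

variable {X : Type*} [MeasurableSpace X] {μ : Set X → ℝ}

def IsFinitelyAdditive (μ : Set X → ℝ) : Prop :=
  ∀ C D : Set X, MeasurableSet C → MeasurableSet D → Disjoint C D → μ (C ∪ D) = μ C + μ D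

namespace IsFinitelyAdditive

theorem empty (hadd : IsFinitelyAdditive μ) : μ ∅ = 0 := by
  have h := hadd ∅ ∅ .empty .empty disjoint_bot_left
  rw [Set.union_empty] at h
  linarith

theorem union_eq_add_diff (hadd : IsFinitelyAdditive μ) {C D : Set X}
    (hC : MeasurableSet C) (hD : MeasurableSet D) :
    μ (C ∪ D) = μ C + μ (D \ C) := by
  rw [← Set.union_sdiff_self, hadd C (D \ C) hC (hD.diff hC) Set.disjoint_sdiff_right]

theorem mono (hpos : ∀ C, MeasurableSet C → 0 ≤ μ C) (hadd : IsFinitelyAdditive μ)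
    {C D : Set X} (hC : MeasurableSet C) (hD : MeasurableSet D) (hCD : C ⊆ D) :
    μ C ≤ μ D := by
  have h := hadd.union_eq_add_diff hC hD
  rw [Set.union_eq_self_of_subset_left hCD] at h
  linarith [hpos _ (hD.diff hC)]

theorem union_le (hpos : ∀ C, MeasurableSet C → 0 ≤ μ C) (hadd : IsFinitelyAdditive μ)
    {C D : Set X} (hC : MeasurableSet C) (hD : MeasurableSet D) :
    μ (C ∪ D) ≤ μ C + μ D := by
  rw [hadd.union_eq_add_diff hC hD]
  linarith [hadd.mono hpos (hD.diff hC) hD Set.sdiff_subset]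

theorem biUnion_le (hpos : ∀ C, MeasurableSet C → 0 ≤ μ C) (hadd : IsFinitelyAdditive μ)
    {ι : Type*} (s : Finset ι) {C : ι → Set X} (hC : ∀ i, MeasurableSet (C i)) :
    μ (⋃ i ∈ s, C i) ≤ ∑ i ∈ s, μ (C i) := by
  classical
  induction s using Finset.induction_on with
  | empty => simp [hadd.empty]
  | insert a s ha ih =>
    rw [Finset.sum_insert ha, Finset.set_biUnion_insert]
    calc μ (C a ∪ ⋃ i ∈ s, C i) ≤ μ (C a) + μ (⋃ i ∈ s, C i) :=
          hadd.union_le hpos (hC a) (.biUnion s.countable_toSet fun i _ => hC i)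
      _ ≤ μ (C a) + ∑ i ∈ s, μ (C i) := by linarith

theorem biUnion_eq (hadd : IsFinitelyAdditive μ) {ι : Type*} (s : Finset ι) {C : ι → Set X}
    (hC : ∀ i, MeasurableSet (C i)) (hdisj : Pairwise (Disjoint on C)) :
    μ (⋃ i ∈ s, C i) = ∑ i ∈ s, μ (C i) := by
  classical
  induction s using Finset.induction_on with
  | empty => simp [hadd.empty]
  | insert a s ha ih =>
    rw [Finset.sum_insert ha, Finset.set_biUnion_insert, ← ih]
    refine hadd _ _ (hC a) (.biUnion s.countable_toSet fun i _ => hC i) ?_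
    exact Set.disjoint_iUnion₂_right.2 fun i hi => hdisj (ne_of_mem_of_not_mem hi ha).symm

theorem iUnion_le (hpos : ∀ C, MeasurableSet C → 0 ≤ μ C) (hadd : IsFinitelyAdditive μ)
    {ι : Type*} [Fintype ι] {C : ι → Set X} (hC : ∀ i, MeasurableSet (C i)) :
    μ (⋃ i, C i) ≤ ∑ i, μ (C i) := by
  simpa using hadd.biUnion_le hpos Finset.univ hC

theorem iUnion_eq (hadd : IsFinitelyAdditive μ) {ι : Type*} [Fintype ι] {C : ι → Set X}
    (hC : ∀ i, MeasurableSet (C i)) (hdisj : Pairwise (Disjoint on C)) :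
    μ (⋃ i, C i) = ∑ i, μ (C i) := by
  simpa using hadd.biUnion_eq Finset.univ hC hdisj

end IsFinitelyAdditive

end FinitelyAdditive

section Displacement

variable {G X : Type*} [Group G] [MulAction G X] [MeasurableSpace X] {μ : Set X → ℝ} {S : Set G}

noncomputable def displacement (μ : Set X → ℝ) (S : Set G) : ℝ :=
  sSup {x : ℝ | ∃ s ∈ S, ∃ C : Set X, MeasurableSet C ∧ x = |μ (s⁻¹ • C) - μ C|}

theorem displacement_nonneg : 0 ≤ displacement μ S :=
  Real.sSup_nonneg <| by
    rintro x ⟨s, -, C, -, rfl⟩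
    exact abs_nonneg _

variable [MeasurableConstSMul G X]

theorem bddAbove_displacementSet (hpos : ∀ C, MeasurableSet C → 0 ≤ μ C)
    (hle : ∀ C, MeasurableSet C → μ C ≤ 1) :
    BddAbove {x : ℝ | ∃ s ∈ S, ∃ C : Set X, MeasurableSet C ∧ x = |μ (s⁻¹ • C) - μ C|} := by
  refine ⟨1, ?_⟩
  rintro x ⟨s, -, C, hC, rfl⟩
  have hsC := hC.const_smul s⁻¹
  rw [abs_le]
  constructor <;> linarith [hpos C hC, hpos _ hsC, hle C hC, hle _ hsC]

theorem measure_smul_le_add_displacement (hpos : ∀ C, MeasurableSet C → 0 ≤ μ C)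
    (hle : ∀ C, MeasurableSet C → μ C ≤ 1) {s : G} (hs : s ∈ S) {C : Set X}
    (hC : MeasurableSet C) :
    μ (s • C) ≤ μ C + displacement μ S := by
  have h : |μ (s⁻¹ • s • C) - μ (s • C)| ≤ displacement μ S :=
    le_csSup (bddAbove_displacementSet hpos hle) ⟨s, hs, s • C, hC.const_smul s, rfl⟩
  rw [inv_smul_smul] at h
  linarith [neg_abs_le (μ C - μ (s • C))]

theorem measure_iUnion_smul_le (hpos : ∀ C, MeasurableSet C → 0 ≤ μ C)
    (hadd : IsFinitelyAdditive μ) (hle : ∀ C, MeasurableSet C → μ C ≤ 1)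
    {ι : Type*} [Fintype ι] {g : ι → G} (hg : ∀ i, g i ∈ S) {A : ι → Set X}
    (hA : ∀ i, MeasurableSet (A i)) :
    μ (⋃ i, g i • A i) ≤ ∑ i, μ (A i) + Fintype.card ι * displacement μ S :=
  calc μ (⋃ i, g i • A i) ≤ ∑ i, μ (g i • A i) :=
        hadd.iUnion_le hpos fun i => (hA i).const_smul (g i)
    _ ≤ ∑ i, (μ (A i) + displacement μ S) :=
        Finset.sum_le_sum fun i _ => measure_smul_le_add_displacement hpos hle (hg i) (hA i)
    _ = ∑ i, μ (A i) + Fintype.card ι * displacement μ S := by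
        rw [Finset.sum_add_distrib, Finset.sum_const, Finset.card_univ, nsmul_eq_mul]

end Displacement

theorem paradoxical_implies_non_amenable_general
    {G X : Type*} [Group G] [MulAction G X] [MeasurableSpace X]
    (hmeas : ∀ g : G, Measurable (fun x : X => g • x))
    (S : Set G) (n m : ℕ)
    (g : Fin n → G) (k : Fin m → G)
    (hg : ∀ i, g i ∈ S) (hk : ∀ j, k j ∈ S)
    (A : Fin n → Set X) (B : Fin m → Set X)
    (hAmeas : ∀ i, MeasurableSet (A i)) (hBmeas : ∀ j, MeasurableSet (B j))
    (hAA : ∀ i j, i ≠ j → Disjoint (A i) (A j))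
    (hBB : ∀ i j, i ≠ j → Disjoint (B i) (B j))
    (hAB : ∀ i j, Disjoint (A i) (B j))
    (hcovA : (⋃ i, g i • A i) = Set.univ)
    (hcovB : (⋃ j, k j • B j) = Set.univ)
    (μ : Set X → ℝ)
    (hpos : ∀ C : Set X, MeasurableSet C → 0 ≤ μ C)
    (htot : μ Set.univ = 1)
    (hadd : ∀ C D : Set X, MeasurableSet C → MeasurableSet D → Disjoint C D →
      μ (C ∪ D) = μ C + μ D) :
    sSup {x : ℝ | ∃ s ∈ S, ∃ C : Set X, MeasurableSet C ∧ x = |μ (s⁻¹ • C) - μ C|} ≥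
      1 / (n + m) := by
  have : MeasurableConstSMul G X := ⟨hmeas⟩
  replace hadd : IsFinitelyAdditive μ := hadd
  have hle : ∀ C, MeasurableSet C → μ C ≤ 1 := fun C hC =>
    htot ▸ hadd.mono hpos hC .univ (Set.subset_univ C)
  have hcoverA := measure_iUnion_smul_le hpos hadd hle hg hAmeas
  have hcoverB := measure_iUnion_smul_le hpos hadd hle hk hBmeas
  rw [hcovA, htot, Fintype.card_fin] at hcoverA
  rw [hcovB, htot, Fintype.card_fin] at hcoverB
  have hpieces : ∑ i, μ (A i) + ∑ j, μ (B j) ≤ 1 := by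
    have hUA := MeasurableSet.iUnion hAmeas
    have hUB := MeasurableSet.iUnion hBmeas
    rw [← hadd.iUnion_eq hAmeas hAA, ← hadd.iUnion_eq hBmeas hBB,
      ← hadd _ _ hUA hUB (Set.disjoint_iUnion_left.2 fun i =>
        Set.disjoint_iUnion_right.2 fun j => hAB i j)]
    exact hle _ (hUA.union hUB)
  change 1 / ((n : ℝ) + m) ≤ displacement μ S
  exact div_le_of_le_mul₀ (by positivity) displacement_nonneg (by linarith)

/-- **Paradoxical implies non-amenable.** If a group `G` acts on a measurable space `X` by
measurable bijections and `X` is `(S, n+m)`-paradoxical with measurable pieces, then for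
every finitely additive probability measure `μ` on the measurable sets,
`sup_{g ∈ S} ‖g⁎μ − μ‖_TV ≥ 1/(n+m)`. -/
theorem paradoxical_implies_non_amenable
    {G X : Type*} [Group G] [MulAction G X] [MeasurableSpace X]
    (hmeas : ∀ g : G, Measurable (fun x : X => g • x))
    (S : Set G) (n m : ℕ) (hn : 1 ≤ n) (hm : 1 ≤ m)
    (g : Fin n → G) (k : Fin m → G)
    (hg : ∀ i, g i ∈ S) (hk : ∀ j, k j ∈ S)
    (A : Fin n → Set X) (B : Fin m → Set X)
    (hAmeas : ∀ i, MeasurableSet (A i)) (hBmeas : ∀ j, MeasurableSet (B j))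
    (hAA : ∀ i j, i ≠ j → Disjoint (A i) (A j))
    (hBB : ∀ i j, i ≠ j → Disjoint (B i) (B j))
    (hAB : ∀ i j, Disjoint (A i) (B j))
    (hcovA : (⋃ i, g i • A i) = Set.univ)
    (hcovB : (⋃ j, k j • B j) = Set.univ)
    (μ : Set X → ℝ)
    (hpos : ∀ C : Set X, MeasurableSet C → 0 ≤ μ C)
    (htot : μ Set.univ = 1)
    (hadd : ∀ C D : Set X, MeasurableSet C → MeasurableSet D → Disjoint C D →
      μ (C ∪ D) = μ C + μ D) :
    sSup {x : ℝ | ∃ s ∈ S, ∃ C : Set X, MeasurableSet C ∧ x = |μ (s⁻¹ • C) - μ C|} ≥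
      1 / (n + m) :=
  paradoxical_implies_non_amenable_general hmeas S n m g k hg hk A B hAmeas hBmeas hAA hBB hAB hcovA
    hcovB μ hpos htot hadd
end

section
/- Let a group G act on a measurable space (X, 𝔐) by measurable bijections and let a, b ∈ G. Suppose there exist four pairwise disjoint nonempty measurable sets A⁺, A⁻, B⁺, B⁻ ∈ 𝔐 such that a·(X ∖ A⁻) ⊆ A⁺ and b·(X ∖ B⁻) ⊆ B⁺. Then for every finitely additive probability measure μ on 𝔐, max { ‖a_*μ − μ‖_TV , ‖b_*μ − μ‖_TV } ≥ 1/2; that is, the action is ({a,b}, 1/2)-non-amenable. -/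
/-!
If `g • (X \ M) ⊆ P`, then `g⁻¹ • P` has measure at least `1 - μ M`, so the test set `P` alone
witnesses `‖g⁎μ - μ‖_TV ≥ 1 - μ M - μ P`. Since the four ping-pong sets are disjoint, their
measures add up to at most `1`, hence the two lower bounds for `a` and `b` add up to at least `1`
and one of them is at least `1/2`.
-/

open scoped Pointwise
open Set

structure IsFinitelyAdditiveProbability {X : Type*} [MeasurableSpace X] (μ : Set X → ℝ) :
    Prop where
  nonneg : ∀ C : Set X, MeasurableSet C → 0 ≤ μ C
  univ_eq_one : μ univ = 1
  union : ∀ C D : Set X, MeasurableSet C → MeasurableSet D → Disjoint C D →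
    μ (C ∪ D) = μ C + μ D

/-- `‖g⁎μ - μ‖_TV`, using `(g⁎μ) C = μ (g⁻¹ • C)`. -/
noncomputable def tvDistSMul {G X : Type*} [Group G] [MulAction G X] [MeasurableSpace X]
    (μ : Set X → ℝ) (g : G) : ℝ :=
  sSup {x : ℝ | ∃ C : Set X, MeasurableSet C ∧ x = |μ (g⁻¹ • C) - μ C|}

namespace IsFinitelyAdditiveProbability

variable {X : Type*} [MeasurableSpace X] {μ : Set X → ℝ}

theorem mono (hμ : IsFinitelyAdditiveProbability μ) {C D : Set X} (hC : MeasurableSet C)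
    (hD : MeasurableSet D) (hCD : C ⊆ D) : μ C ≤ μ D := by
  have h := hμ.union C (D \ C) hC (hD.diff hC) disjoint_sdiff_right
  rw [union_sdiff_cancel hCD] at h
  linarith [hμ.nonneg (D \ C) (hD.diff hC)]

theorem le_one (hμ : IsFinitelyAdditiveProbability μ) {C : Set X} (hC : MeasurableSet C) :
    μ C ≤ 1 :=
  hμ.univ_eq_one ▸ hμ.mono hC MeasurableSet.univ (subset_univ C)

theorem univ_diff (hμ : IsFinitelyAdditiveProbability μ) {C : Set X} (hC : MeasurableSet C) :
    μ (univ \ C) = 1 - μ C := by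
  have h := hμ.union C (univ \ C) hC (MeasurableSet.univ.diff hC) disjoint_sdiff_right
  rw [union_sdiff_cancel (subset_univ C), hμ.univ_eq_one] at h
  linarith

theorem add_le_one_of_disjoint (hμ : IsFinitelyAdditiveProbability μ) {C D : Set X}
    (hC : MeasurableSet C) (hD : MeasurableSet D) (hCD : Disjoint C D) : μ C + μ D ≤ 1 :=
  hμ.union C D hC hD hCD ▸ hμ.le_one (hC.union hD)

theorem abs_sub_le_one (hμ : IsFinitelyAdditiveProbability μ) {C D : Set X}
    (hC : MeasurableSet C) (hD : MeasurableSet D) : |μ C - μ D| ≤ 1 := by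
  rw [abs_le]
  constructor <;> linarith [hμ.nonneg C hC, hμ.nonneg D hD, hμ.le_one hC, hμ.le_one hD]

variable {G : Type*} [Group G] [MulAction G X] [MeasurableConstSMul G X]

theorem abs_sub_le_tvDistSMul (hμ : IsFinitelyAdditiveProbability μ) (g : G) {C : Set X}
    (hC : MeasurableSet C) : |μ (g⁻¹ • C) - μ C| ≤ tvDistSMul μ g := by
  refine le_csSup ⟨1, ?_⟩ ⟨C, hC, rfl⟩
  rintro x ⟨D, hD, rfl⟩
  exact hμ.abs_sub_le_one (hD.const_smul g⁻¹) hD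

theorem one_sub_sub_le_tvDistSMul (hμ : IsFinitelyAdditiveProbability μ) {g : G}
    {P M : Set X} (hP : MeasurableSet P) (hM : MeasurableSet M) (hg : g • (univ \ M) ⊆ P) :
    1 - μ M - μ P ≤ tvDistSMul μ g := by
  have hinv : 1 - μ M ≤ μ (g⁻¹ • P) := by
    rw [← hμ.univ_diff hM]
    exact hμ.mono (MeasurableSet.univ.diff hM) (hP.const_smul g⁻¹)
      (smul_set_subset_iff_subset_inv_smul_set.mp hg)
  calc 1 - μ M - μ P ≤ |μ (g⁻¹ • P) - μ P| := by linarith [le_abs_self (μ (g⁻¹ • P) - μ P)]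
    _ ≤ tvDistSMul μ g := hμ.abs_sub_le_tvDistSMul g hP

end IsFinitelyAdditiveProbability

theorem ping_pong_pair_non_amenable_general
    {G X : Type*} [Group G] [MulAction G X] [MeasurableSpace X]
    (hmeas : ∀ g : G, Measurable (fun x : X => g • x))
    (a b : G) (Ap Am Bp Bm : Set X)
    (hApm : MeasurableSet Ap) (hAmm : MeasurableSet Am)
    (hBpm : MeasurableSet Bp) (hBmm : MeasurableSet Bm)
    (h₁ : Disjoint Ap Am) (h₂ : Disjoint Ap Bp) (h₃ : Disjoint Ap Bm)
    (h₄ : Disjoint Am Bp) (h₅ : Disjoint Am Bm) (h₆ : Disjoint Bp Bm)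
    (ha : a • (Set.univ \ Am) ⊆ Ap) (hb : b • (Set.univ \ Bm) ⊆ Bp)
    (μ : Set X → ℝ)
    (hpos : ∀ C : Set X, MeasurableSet C → 0 ≤ μ C)
    (htot : μ Set.univ = 1)
    (hadd : ∀ C D : Set X, MeasurableSet C → MeasurableSet D → Disjoint C D →
      μ (C ∪ D) = μ C + μ D) :
    max (sSup {x : ℝ | ∃ C : Set X, MeasurableSet C ∧ x = |μ (a⁻¹ • C) - μ C|})
        (sSup {x : ℝ | ∃ C : Set X, MeasurableSet C ∧ x = |μ (b⁻¹ • C) - μ C|}) ≥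
      1 / 2 := by
  have : MeasurableConstSMul G X := ⟨hmeas⟩
  have hμ : IsFinitelyAdditiveProbability μ := ⟨hpos, htot, hadd⟩
  have hA := hμ.one_sub_sub_le_tvDistSMul hApm hAmm ha
  have hB := hμ.one_sub_sub_le_tvDistSMul hBpm hBmm hb
  have hsum := hμ.add_le_one_of_disjoint (hApm.union hAmm) (hBpm.union hBmm)
    (disjoint_union_left.mpr ⟨disjoint_union_right.mpr ⟨h₂, h₃⟩,
      disjoint_union_right.mpr ⟨h₄, h₅⟩⟩)
  rw [hadd _ _ hApm hAmm h₁, hadd _ _ hBpm hBmm h₆] at hsum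
  show max (tvDistSMul μ a) (tvDistSMul μ b) ≥ 1 / 2
  linarith [le_max_left (tvDistSMul μ a) (tvDistSMul μ b),
    le_max_right (tvDistSMul μ a) (tvDistSMul μ b)]

/-- **Ping-pong pairs give a spectral gap for measures.** If `a, b` form a ping-pong pair
with measurable table on a measurable `G`-space `X`, then for every finitely additive
probability measure `μ`, `max {‖a⁎μ − μ‖_TV, ‖b⁎μ − μ‖_TV} ≥ 1/2`. -/
theorem ping_pong_pair_non_amenable
    {G X : Type*} [Group G] [MulAction G X] [MeasurableSpace X]
    (hmeas : ∀ g : G, Measurable (fun x : X => g • x))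
    (a b : G) (Ap Am Bp Bm : Set X)
    (hApm : MeasurableSet Ap) (hAmm : MeasurableSet Am)
    (hBpm : MeasurableSet Bp) (hBmm : MeasurableSet Bm)
    (hApn : Ap.Nonempty) (hAmn : Am.Nonempty) (hBpn : Bp.Nonempty) (hBmn : Bm.Nonempty)
    (h₁ : Disjoint Ap Am) (h₂ : Disjoint Ap Bp) (h₃ : Disjoint Ap Bm)
    (h₄ : Disjoint Am Bp) (h₅ : Disjoint Am Bm) (h₆ : Disjoint Bp Bm)
    (ha : a • (Set.univ \ Am) ⊆ Ap) (hb : b • (Set.univ \ Bm) ⊆ Bp)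
    (μ : Set X → ℝ)
    (hpos : ∀ C : Set X, MeasurableSet C → 0 ≤ μ C)
    (htot : μ Set.univ = 1)
    (hadd : ∀ C D : Set X, MeasurableSet C → MeasurableSet D → Disjoint C D →
      μ (C ∪ D) = μ C + μ D) :
    max (sSup {x : ℝ | ∃ C : Set X, MeasurableSet C ∧ x = |μ (a⁻¹ • C) - μ C|})
        (sSup {x : ℝ | ∃ C : Set X, MeasurableSet C ∧ x = |μ (b⁻¹ • C) - μ C|}) ≥
      1 / 2 :=
  ping_pong_pair_non_amenable_general hmeas a b Ap Am Bp Bm hApm hAmm hBpm hBmm h₁ h₂ h₃ h₄ h₅ h₆ ha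
    hb μ hpos htot hadd
end

section
/- Let G be a group, S ⊆ G a nonempty finite subset, H a complex Hilbert space, and π : G → U(H) a unitary representation (a group homomorphism into the group of linear isometric bijections of H). Let T = (card S)⁻¹ · Σ_{g ∈ S} π(g), a bounded linear operator on H. Then: (a) for every ξ ∈ H with ‖ξ‖ = 1 there exists g ∈ S with ‖π(g)ξ − ξ‖ ≥ 1 − ‖T‖; (b) if moreover 1 ∈ S and S = S⁻¹, then ‖T‖ ≤ 1 − κ²/(16 · card S), where κ = inf { sup_{g ∈ S} ‖π(g)ξ − ξ‖ : ξ ∈ H, ‖ξ‖ = 1 } is the Kazhdan constant of π relative to S. -/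
/-!
Part (a): `Tξ - ξ` is the average of the vectors `π g ξ - ξ`, so its norm is at most the largest
of them, while `1 = ‖ξ‖ ≤ ‖Tξ‖ + ‖Tξ - ξ‖ ≤ ‖T‖ + ‖Tξ - ξ‖`.

Part (b): for a unit vector `ξ` pick `g ∈ S` with `‖π g ξ - ξ‖ ≥ κ`. The parallelogram law gives
`‖π g ξ + ξ‖ ≤ 2 - κ² / 4`, and pairing the term of `g` with the term `π 1 ξ = ξ` in `Σ π h ξ`
while bounding the other `card S - 2` terms by `1` yields `‖Tξ‖ ≤ 1 - κ² / (4 card S)`, which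
is stronger than the bound with `16`.
-/

open Finset

section Vectors

variable {𝕜 E ι : Type*} [RCLike 𝕜] [NormedAddCommGroup E]

theorem exists_norm_inv_card_smul_sum_sub_le [NormedSpace 𝕜 E] {S : Finset ι} (hS : S.Nonempty)
    (v : ι → E) (x : E) : ∃ i ∈ S, ‖(#S : 𝕜)⁻¹ • ∑ j ∈ S, v j - x‖ ≤ ‖v i - x‖ := by
  obtain ⟨i, hi, hmax⟩ := S.exists_max_image (fun j => ‖v j - x‖) hS
  refine ⟨i, hi, ?_⟩
  have hcard : (#S : 𝕜) ≠ 0 := Nat.cast_ne_zero.2 hS.card_pos.ne'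
  have hsub : (#S : 𝕜)⁻¹ • ∑ j ∈ S, v j - x = (#S : 𝕜)⁻¹ • ∑ j ∈ S, (v j - x) := by
    rw [sum_sub_distrib, sum_const, smul_sub, ← Nat.cast_smul_eq_nsmul 𝕜, smul_smul,
      inv_mul_cancel₀ hcard, one_smul]
  rw [hsub, norm_smul, norm_inv, RCLike.norm_natCast,
    inv_mul_le_iff₀ (by exact_mod_cast hS.card_pos)]
  calc ‖∑ j ∈ S, (v j - x)‖ ≤ ∑ _j ∈ S, ‖v i - x‖ := norm_sum_le_of_le S hmax
    _ = #S * ‖v i - x‖ := by rw [sum_const, nsmul_eq_mul]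

theorem one_sub_opNorm_le_norm_apply_sub [NormedSpace 𝕜 E] (T : E →L[𝕜] E) {ξ : E}
    (hξ : ‖ξ‖ = 1) : 1 - ‖T‖ ≤ ‖T ξ - ξ‖ := by
  have hTξ : ‖T ξ‖ ≤ ‖T‖ := by simpa [hξ] using T.le_opNorm ξ
  have hsub : ‖ξ‖ - ‖T ξ‖ ≤ ‖T ξ - ξ‖ := norm_sub_rev ξ (T ξ) ▸ norm_sub_norm_le ξ (T ξ)
  linarith

theorem norm_sum_le_card (s : Finset ι) {v : ι → E} (hv : ∀ i ∈ s, ‖v i‖ = 1) :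
    ‖∑ i ∈ s, v i‖ ≤ #s :=
  (norm_sum_le_of_le s fun i hi => (hv i hi).le).trans_eq (by simp)

variable [InnerProductSpace 𝕜 E]

include 𝕜 in
theorem norm_add_le_two_sub_norm_sub_sq_div_four {u v : E} (hu : ‖u‖ = 1) (hv : ‖v‖ = 1) :
    ‖u + v‖ ≤ 2 - ‖u - v‖ ^ 2 / 4 := by
  have hpar := parallelogram_law_with_norm 𝕜 u v
  rw [hu, hv] at hpar
  nlinarith [norm_nonneg (u + v), norm_nonneg (u - v)]

include 𝕜 in
theorem norm_sum_le_card_sub_norm_sub_sq_div_four {S : Finset ι} {v : ι → E}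
    (hv : ∀ i ∈ S, ‖v i‖ = 1) {i j : ι} (hi : i ∈ S) (hj : j ∈ S) :
    ‖∑ k ∈ S, v k‖ ≤ #S - ‖v i - v j‖ ^ 2 / 4 := by
  classical
  rcases eq_or_ne i j with rfl | hij
  · simpa using norm_sum_le_card S hv
  have hj' : j ∈ S.erase i := mem_erase.2 ⟨hij.symm, hj⟩
  have hrest : ‖∑ k ∈ (S.erase i).erase j, v k‖ ≤ #S - 2 := by
    refine (norm_sum_le_card _ fun k hk => hv k (mem_of_mem_erase (mem_of_mem_erase hk))).trans ?_
    rw [cast_card_erase_of_mem hj', cast_card_erase_of_mem hi]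
    linarith
  rw [← add_sum_erase S v hi, ← add_sum_erase _ v hj', ← add_assoc]
  calc ‖v i + v j + ∑ k ∈ (S.erase i).erase j, v k‖
      ≤ ‖v i + v j‖ + ‖∑ k ∈ (S.erase i).erase j, v k‖ := norm_add_le _ _
    _ ≤ (2 - ‖v i - v j‖ ^ 2 / 4) + (#S - 2) :=
      add_le_add (norm_add_le_two_sub_norm_sub_sq_div_four (𝕜 := 𝕜) (hv i hi) (hv j hj)) hrest
    _ = #S - ‖v i - v j‖ ^ 2 / 4 := by ring

end Vectors

section Representations

variable {G 𝕜 E : Type*} [Group G] [RCLike 𝕜] [NormedAddCommGroup E]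

section NormedSpace

variable [NormedSpace 𝕜 E] (π : G →* (E ≃ₗᵢ[𝕜] E)) (S : Finset G)

noncomputable def averagingOperator : E →L[𝕜] E :=
  (#S : 𝕜)⁻¹ • ∑ g ∈ S, (π g).toLinearIsometry.toContinuousLinearMap

noncomputable def maxDisplacement (ξ : E) : ℝ :=
  sSup {y : ℝ | ∃ g ∈ S, y = ‖π g ξ - ξ‖}

noncomputable def kazhdanConstant : ℝ :=
  sInf {x : ℝ | ∃ ξ : E, ‖ξ‖ = 1 ∧ x = maxDisplacement π S ξ}

theorem averagingOperator_apply (x : E) :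
    averagingOperator π S x = (#S : 𝕜)⁻¹ • ∑ g ∈ S, π g x := by
  simp [averagingOperator]

theorem exists_norm_averagingOperator_apply_sub_le (hS : S.Nonempty) (x : E) :
    ∃ g ∈ S, ‖averagingOperator π S x - x‖ ≤ ‖π g x - x‖ := by
  rw [averagingOperator_apply π S]
  exact exists_norm_inv_card_smul_sum_sub_le hS (fun g => π g x) x

theorem maxDisplacement_nonneg (ξ : E) : 0 ≤ maxDisplacement π S ξ :=
  Real.sSup_nonneg (by rintro _ ⟨g, -, rfl⟩; positivity)

theorem maxDisplacement_le_two {ξ : E} (hξ : ‖ξ‖ = 1) : maxDisplacement π S ξ ≤ 2 := by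
  refine Real.sSup_le ?_ zero_le_two
  rintro _ ⟨g, -, rfl⟩
  calc ‖π g ξ - ξ‖ ≤ ‖π g ξ‖ + ‖ξ‖ := norm_sub_le _ _
    _ = 2 := by rw [LinearIsometryEquiv.norm_map, hξ]; norm_num

theorem maxDisplacement_eq_sup' (hS : S.Nonempty) (ξ : E) :
    maxDisplacement π S ξ = S.sup' hS fun g => ‖π g ξ - ξ‖ := by
  rw [sup'_eq_csSup_image, maxDisplacement]
  congr 1
  ext y
  simp [eq_comm]

theorem kazhdanConstant_nonneg : 0 ≤ kazhdanConstant π S :=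
  Real.sInf_nonneg (by rintro _ ⟨ξ, -, rfl⟩; exact maxDisplacement_nonneg π S ξ)

theorem kazhdanConstant_le_maxDisplacement {ξ : E} (hξ : ‖ξ‖ = 1) :
    kazhdanConstant π S ≤ maxDisplacement π S ξ :=
  csInf_le ⟨0, by rintro _ ⟨η, -, rfl⟩; exact maxDisplacement_nonneg π S η⟩ ⟨ξ, hξ, rfl⟩

theorem kazhdanConstant_le_two : kazhdanConstant π S ≤ 2 := by
  by_cases h : ∃ ξ : E, ‖ξ‖ = 1
  · obtain ⟨ξ, hξ⟩ := h
    exact (kazhdanConstant_le_maxDisplacement π S hξ).trans (maxDisplacement_le_two π S hξ)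
  · have hempty : {x : ℝ | ∃ ξ : E, ‖ξ‖ = 1 ∧ x = maxDisplacement π S ξ} = ∅ :=
      Set.eq_empty_of_forall_notMem fun _ ⟨ξ, hξ, _⟩ => h ⟨ξ, hξ⟩
    rw [kazhdanConstant, hempty, Real.sInf_empty]
    exact zero_le_two

theorem exists_kazhdanConstant_le_norm_sub (hS : S.Nonempty) {ξ : E} (hξ : ‖ξ‖ = 1) :
    ∃ g ∈ S, kazhdanConstant π S ≤ ‖π g ξ - ξ‖ := by
  obtain ⟨g, hg, hsup⟩ := S.exists_mem_eq_sup' hS fun g => ‖π g ξ - ξ‖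
  exact ⟨g, hg, (kazhdanConstant_le_maxDisplacement π S hξ).trans_eq
    ((maxDisplacement_eq_sup' π S hS ξ).trans hsup)⟩

end NormedSpace

variable [InnerProductSpace 𝕜 E] (π : G →* (E ≃ₗᵢ[𝕜] E)) {S : Finset G}

theorem norm_averagingOperator_apply_le (h1 : (1 : G) ∈ S) {g : G} (hg : g ∈ S) {ξ : E}
    (hξ : ‖ξ‖ = 1) : ‖averagingOperator π S ξ‖ ≤ 1 - ‖π g ξ - ξ‖ ^ 2 / (4 * #S) := by
  have hcard : (0 : ℝ) < #S := by exact_mod_cast card_pos.2 ⟨1, h1⟩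
  have hsum := norm_sum_le_card_sub_norm_sub_sq_div_four (𝕜 := 𝕜) (v := fun h => π h ξ)
    (fun h _ => by rw [LinearIsometryEquiv.norm_map, hξ]) hg h1
  rw [map_one, LinearIsometryEquiv.coe_one, id] at hsum
  rw [averagingOperator_apply, norm_smul, norm_inv, RCLike.norm_natCast]
  calc (#S : ℝ)⁻¹ * ‖∑ h ∈ S, π h ξ‖ ≤ (#S : ℝ)⁻¹ * (#S - ‖π g ξ - ξ‖ ^ 2 / 4) := by gcongr
    _ = 1 - ‖π g ξ - ξ‖ ^ 2 / (4 * #S) := by field_simp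

theorem norm_averagingOperator_le (h1 : (1 : G) ∈ S) :
    ‖averagingOperator π S‖ ≤ 1 - kazhdanConstant π S ^ 2 / (4 * #S) := by
  have hcard : (1 : ℝ) ≤ #S := by exact_mod_cast card_pos.2 ⟨1, h1⟩
  have hκ₀ := kazhdanConstant_nonneg π S
  have hκ₂ := kazhdanConstant_le_two π S
  refine ContinuousLinearMap.opNorm_le_of_unit_norm ?_ fun ξ hξ => ?_
  · rw [sub_nonneg, div_le_one (by positivity)]
    nlinarith
  · obtain ⟨g, hg, hκg⟩ := exists_kazhdanConstant_le_norm_sub π S ⟨1, h1⟩ hξ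
    calc ‖averagingOperator π S ξ‖ ≤ 1 - ‖π g ξ - ξ‖ ^ 2 / (4 * #S) :=
          norm_averagingOperator_apply_le π h1 hg hξ
      _ ≤ 1 - kazhdanConstant π S ^ 2 / (4 * #S) := by gcongr

end Representations

theorem averaging_operator_kazhdan_general
    {G : Type*} [Group G] {H : Type*} [NormedAddCommGroup H] [InnerProductSpace ℂ H]
    (π : G →* (H ≃ₗᵢ[ℂ] H)) (S : Finset G) (hS : S.Nonempty)
    (T : H →L[ℂ] H)
    (hT : T = ((S.card : ℂ))⁻¹ •
      ∑ g ∈ S, ((π g).toLinearIsometry.toContinuousLinearMap))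
    (κ : ℝ)
    (hκ : κ = sInf {x : ℝ | ∃ ξ : H, ‖ξ‖ = 1 ∧
      x = sSup {y : ℝ | ∃ g ∈ S, y = ‖π g ξ - ξ‖}}) :
    (∀ ξ : H, ‖ξ‖ = 1 → ∃ g ∈ S, 1 - ‖T‖ ≤ ‖π g ξ - ξ‖) ∧
    ((1 : G) ∈ S → (∀ g : G, g ∈ S ↔ g⁻¹ ∈ S) →
      ‖T‖ ≤ 1 - κ ^ 2 / (16 * S.card)) := by
  change T = averagingOperator π S at hT
  change κ = kazhdanConstant π S at hκ
  subst hT hκ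
  refine ⟨fun ξ hξ => ?_, fun h1 _ => ?_⟩
  · obtain ⟨g, hg, hle⟩ := exists_norm_averagingOperator_apply_sub_le π S hS ξ
    exact ⟨g, hg, (one_sub_opNorm_le_norm_apply_sub _ hξ).trans hle⟩
  · calc ‖averagingOperator π S‖ ≤ 1 - kazhdanConstant π S ^ 2 / (4 * #S) :=
          norm_averagingOperator_le π h1
      _ ≤ 1 - kazhdanConstant π S ^ 2 / (16 * #S) := by
          have hcard : (0 : ℝ) < #S := by exact_mod_cast card_pos.2 ⟨1, h1⟩
          exact sub_le_sub_left (div_le_div_of_nonneg_left (sq_nonneg _) (by linarith)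
            (by linarith)) 1

/-- **Convolution operators and Kazhdan constants.** Let `π` be a unitary representation of
`G` on a complex Hilbert space `H`, `S ⊆ G` a nonempty finite subset, and
`T = (card S)⁻¹ Σ_{g ∈ S} π(g)` the averaging operator. Then (a) every unit vector `ξ`
admits `g ∈ S` with `‖π(g)ξ − ξ‖ ≥ 1 − ‖T‖`; and (b) if `1 ∈ S` and `S = S⁻¹`, then
`‖T‖ ≤ 1 − κ²/(16 card S)` where `κ` is the Kazhdan constant of `π` relative to `S`. -/
theorem averaging_operator_kazhdan
    {G : Type*} [Group G] {H : Type*} [NormedAddCommGroup H] [InnerProductSpace ℂ H]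
    [CompleteSpace H]
    (π : G →* (H ≃ₗᵢ[ℂ] H)) (S : Finset G) (hS : S.Nonempty)
    (T : H →L[ℂ] H)
    (hT : T = ((S.card : ℂ))⁻¹ •
      ∑ g ∈ S, ((π g).toLinearIsometry.toContinuousLinearMap))
    (κ : ℝ)
    (hκ : κ = sInf {x : ℝ | ∃ ξ : H, ‖ξ‖ = 1 ∧
      x = sSup {y : ℝ | ∃ g ∈ S, y = ‖π g ξ - ξ‖}}) :
    (∀ ξ : H, ‖ξ‖ = 1 → ∃ g ∈ S, 1 - ‖T‖ ≤ ‖π g ξ - ξ‖) ∧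
    ((1 : G) ∈ S → (∀ g : G, g ∈ S ↔ g⁻¹ ∈ S) →
      ‖T‖ ≤ 1 - κ ^ 2 / (16 * S.card)) :=
  averaging_operator_kazhdan_general π S hS T hT κ hκ
end
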